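/- arXiv:2208.14315 — 5 statements merged into one kernel-verified Lean document; each statement's English description precedes it below -/
import Mathlib

section
/- For any unsigned permutation π of {1,...,n}, the prefix exchange distance of π (the minimum number of exchanges of the form ε(1,j) needed to sort π) equals n + c(Γ(π)) − 2c₁(Γ(π)) − 0 if π(1)=1 and n + c(Γ(π)) − 2c₁(Γ(π)) − 2 otherwise, where Γ(π) is the functional graph of π, c counts its cycles and c₁ counts its fixed points. -/
/-- Number of cycles of the functional graph Γ(π): nontrivial cycles plus fixed points. -/
def cyc {n : ℕ} (π : Equiv.Perm (Fin n)) : ℕ :=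
  π.cycleType.card + (Finset.univ.filter fun i => π i = i).card

/-- Number of fixed points (1-cycles of Γ(π)). -/
def fixpts {n : ℕ} (π : Equiv.Perm (Fin n)) : ℕ :=
  (Finset.univ.filter fun i => π i = i).card

/-- Prefix exchange distance: the minimum number of exchanges ε(1,j) (swapping
positions 1 and j, here positions 0 and j in 0-indexing) sorting π to the identity. -/
noncomputable def ped {n : ℕ} (π : Equiv.Perm (Fin (n+1))) : ℕ :=
  sInf {k | ∃ l : List (Fin (n+1)), l.length = k ∧ (∀ j ∈ l, j ≠ 0) ∧
    π * (l.map (Equiv.swap 0)).prod = 1}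

open Equiv Equiv.Perm Finset

section Aux

variable {α : Type*} [Fintype α] [DecidableEq α]

/-- Number of distinct nontrivial cycles of `f` passing through `a` or `b`. -/
noncomputable def qq (f : Perm α) (a b : α) : ℕ :=
  (({f.cycleOf a, f.cycleOf b} : Finset (Perm α)) ∩ f.cycleFactorsFinset).card

theorem qq_comm (f : Perm α) (a b : α) : qq f a b = qq f b a := by
  unfold qq; rw [Finset.pair_comm]

theorem qq_le_two (f : Perm α) (a b : α) : qq f a b ≤ 2 := by
  refine (Finset.card_le_card inter_subset_left).trans ?_
  exact (Finset.card_insert_le _ _).trans (by simp)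

theorem one_le_qq {f : Perm α} {a : α} (h : f a ≠ a) (b : α) : 1 ≤ qq f a b := by
  refine Finset.card_pos.mpr ⟨f.cycleOf a, Finset.mem_inter.mpr ⟨Finset.mem_insert_self _ _, ?_⟩⟩
  exact cycleOf_mem_cycleFactorsFinset_iff.mpr (mem_support.mpr h)

theorem one_notMem_cycleFactorsFinset (f : Perm α) : (1 : Perm α) ∉ f.cycleFactorsFinset :=
  fun h => (mem_cycleFactorsFinset_iff.mp h).1.ne_one rfl

theorem qq_le_one_right {f : Perm α} (a : α) {b : α} (h : f b = b) : qq f a b ≤ 1 := by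
  have hsub : (({f.cycleOf a, f.cycleOf b} : Finset (Perm α)) ∩ f.cycleFactorsFinset)
      ⊆ {f.cycleOf a} := by
    intro c hc
    rcases Finset.mem_inter.mp hc with ⟨hp, hF⟩
    rcases Finset.mem_insert.mp hp with h1 | h1
    · simpa using h1
    · exfalso
      rw [Finset.mem_singleton] at h1
      rw [h1, (cycleOf_eq_one_iff f).mpr h] at hF
      exact one_notMem_cycleFactorsFinset f hF
  exact (Finset.card_le_card hsub).trans (by simp)

theorem qq_le_one_left {f : Perm α} {a : α} (h : f a = a) (b : α) : qq f a b ≤ 1 := by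
  rw [qq_comm]; exact qq_le_one_right b h

theorem qq_eq_zero {f : Perm α} {a b : α} (ha : f a = a) (hb : f b = b) : qq f a b = 0 := by
  unfold qq
  rw [Finset.card_eq_zero, Finset.eq_empty_iff_forall_notMem]
  intro c hc
  rcases Finset.mem_inter.mp hc with ⟨hp, hF⟩
  rcases Finset.mem_insert.mp hp with h1 | h1
  · rw [h1, (cycleOf_eq_one_iff f).mpr ha] at hF
    exact one_notMem_cycleFactorsFinset f hF
  · rw [Finset.mem_singleton] at h1
    rw [h1, (cycleOf_eq_one_iff f).mpr hb] at hF
    exact one_notMem_cycleFactorsFinset f hF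

theorem qq_le_one_sameCycle {f : Perm α} {a b : α} (h : f.SameCycle a b) : qq f a b ≤ 1 := by
  unfold qq
  rw [h.cycleOf_eq]
  refine (Finset.card_le_card inter_subset_left).trans ?_
  simp

/-- A cycle of `f` through neither `a` nor `b` is a cycle of `f * swap a b`. -/
theorem mem_factors_mul_swap {f : Perm α} {a b : α} {c : Perm α}
    (hc : c ∈ f.cycleFactorsFinset) (hca : c ≠ f.cycleOf a) (hcb : c ≠ f.cycleOf b) :
    c ∈ (f * Equiv.swap a b).cycleFactorsFinset := by
  have hac : a ∉ c.support := fun h => hca (cycle_is_cycleOf h hc)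
  have hbc : b ∉ c.support := fun h => hcb (cycle_is_cycleOf h hc)
  have hdisj : Perm.Disjoint (f * c⁻¹) c := disjoint_mul_inv_of_mem_cycleFactorsFinset hc
  have hsc : Perm.Disjoint (Equiv.swap a b) c := by
    intro x
    by_cases hxc : c x = x
    · exact Or.inr hxc
    · left
      have hx : x ∈ c.support := mem_support.mpr hxc
      exact Equiv.swap_apply_of_ne_of_ne (fun h => hac (h ▸ hx)) (fun h => hbc (h ▸ hx))
  have key : (f * c⁻¹ * Equiv.swap a b) * c = f * Equiv.swap a b := by
    rw [mul_assoc, hsc.commute.eq, ← mul_assoc, inv_mul_cancel_right]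
  have hd2 : Perm.Disjoint (f * c⁻¹ * Equiv.swap a b) c := by
    intro x
    by_cases hxc : c x = x
    · exact Or.inr hxc
    · left
      have hx : x ∈ c.support := mem_support.mpr hxc
      have h1 : Equiv.swap a b x = x :=
        Equiv.swap_apply_of_ne_of_ne (fun h => hac (h ▸ hx)) (fun h => hbc (h ▸ hx))
      have h2 : (f * c⁻¹) x = x := (hdisj x).resolve_right hxc
      simp only [Perm.mul_apply] at h2 ⊢
      rw [h1]
      exact h2
  rw [← key, hd2.cycleFactorsFinset_mul_eq_union]
  refine Finset.mem_union_right _ ?_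
  rw [(mem_cycleFactorsFinset_iff.mp hc).1.cycleFactorsFinset_eq_singleton]
  exact Finset.mem_singleton_self c

theorem t_le {f : Perm α} (a b : α) :
    f.cycleFactorsFinset.card + qq (f * Equiv.swap a b) a b ≤
      (f * Equiv.swap a b).cycleFactorsFinset.card + qq f a b := by
  set σ := f * Equiv.swap a b with hσ
  set S : Finset (Perm α) := f.cycleFactorsFinset \ {f.cycleOf a, f.cycleOf b} with hS
  have hmemS : ∀ c ∈ S, c ∈ f.cycleFactorsFinset ∧ c ≠ f.cycleOf a ∧ c ≠ f.cycleOf b := by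
    intro c hc
    rw [hS, Finset.mem_sdiff, Finset.mem_insert, Finset.mem_singleton] at hc
    push_neg at hc
    exact ⟨hc.1, hc.2.1, hc.2.2⟩
  have hS_sub : S ⊆ σ.cycleFactorsFinset := by
    intro c hc
    obtain ⟨h1, h2, h3⟩ := hmemS c hc
    exact mem_factors_mul_swap h1 h2 h3
  have hSab : ∀ c ∈ S, a ∉ c.support ∧ b ∉ c.support := by
    intro c hc
    obtain ⟨h1, h2, h3⟩ := hmemS c hc
    exact ⟨fun h => h2 (cycle_is_cycleOf h h1), fun h => h3 (cycle_is_cycleOf h h1)⟩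
  set T : Finset (Perm α) := ({σ.cycleOf a, σ.cycleOf b} : Finset (Perm α)) ∩ σ.cycleFactorsFinset
    with hT
  have hdisjST : _root_.Disjoint S T := by
    rw [Finset.disjoint_left]
    intro c hcS hcT
    rcases Finset.mem_inter.mp hcT with ⟨hpair, hF⟩
    rcases Finset.mem_insert.mp hpair with h | h
    · rw [h] at hF
      have haF : a ∈ σ.support := cycleOf_mem_cycleFactorsFinset_iff.mp hF
      have : a ∈ c.support := by
        rw [h]
        exact mem_support_cycleOf_iff.mpr ⟨SameCycle.refl _ _, haF⟩
      exact (hSab c hcS).1 this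
    · rw [Finset.mem_singleton] at h
      rw [h] at hF
      have hbF : b ∈ σ.support := cycleOf_mem_cycleFactorsFinset_iff.mp hF
      have : b ∈ c.support := by
        rw [h]
        exact mem_support_cycleOf_iff.mpr ⟨SameCycle.refl _ _, hbF⟩
      exact (hSab c hcS).2 this
  have h1 : S.card + qq σ a b ≤ σ.cycleFactorsFinset.card := by
    have e1 : S.card + qq σ a b = (S ∪ T).card := by
      rw [Finset.card_union_of_disjoint hdisjST]; rfl
    rw [e1]
    exact Finset.card_le_card (Finset.union_subset hS_sub inter_subset_right)
  have h2 : f.cycleFactorsFinset.card ≤ S.card + qq f a b := by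
    have hsub : f.cycleFactorsFinset ⊆
        S ∪ (({f.cycleOf a, f.cycleOf b} : Finset (Perm α)) ∩ f.cycleFactorsFinset) := by
      intro c hc
      by_cases h : c ∈ ({f.cycleOf a, f.cycleOf b} : Finset (Perm α))
      · exact Finset.mem_union_right _ (Finset.mem_inter.mpr ⟨h, hc⟩)
      · exact Finset.mem_union_left _ (Finset.mem_sdiff.mpr ⟨hc, h⟩)
    refine (Finset.card_le_card hsub).trans ?_
    exact (Finset.card_union_le _ _)
  omega

theorem t_eq (f : Perm α) (a b : α) :
    f.cycleFactorsFinset.card + qq (f * Equiv.swap a b) a b =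
      (f * Equiv.swap a b).cycleFactorsFinset.card + qq f a b := by
  have h1 := t_le (f := f) a b
  have h2 := t_le (f := f * Equiv.swap a b) a b
  rw [mul_assoc, Equiv.swap_mul_self, mul_one] at h2
  omega

theorem supp_eq (f : Perm α) {a b : α} (hab : a ≠ b) :
    f.support.card + ((if (f * Equiv.swap a b) a = a then 0 else 1)
        + (if (f * Equiv.swap a b) b = b then 0 else 1))
      = (f * Equiv.swap a b).support.card
        + ((if f a = a then 0 else 1) + (if f b = b then 0 else 1)) := by
  set σ := f * Equiv.swap a b with hσ
  have happly : ∀ x, x ≠ a → x ≠ b → σ x = f x := by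
    intro x hxa hxb
    rw [hσ]
    simp only [Perm.mul_apply]
    rw [Equiv.swap_apply_of_ne_of_ne hxa hxb]
  have hd : σ.support \ ({a, b} : Finset α) = f.support \ ({a, b} : Finset α) := by
    ext x
    simp only [Finset.mem_sdiff, Finset.mem_insert, Finset.mem_singleton, mem_support]
    constructor
    · rintro ⟨h1, h2⟩
      push_neg at h2
      rw [happly x h2.1 h2.2] at h1
      exact ⟨h1, by tauto⟩
    · rintro ⟨h1, h2⟩
      push_neg at h2
      rw [← happly x h2.1 h2.2] at h1
      exact ⟨h1, by tauto⟩
  have key : ∀ g : Perm α, g.support.card = (g.support \ ({a, b} : Finset α)).card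
      + ((if g a = a then 0 else 1) + (if g b = b then 0 else 1)) := by
    intro g
    have h1 := Finset.card_inter_add_card_sdiff g.support ({a, b} : Finset α)
    have h2 : (g.support ∩ ({a, b} : Finset α)).card
        = (if g a = a then 0 else 1) + (if g b = b then 0 else 1) := by
      have e : g.support ∩ ({a, b} : Finset α)
          = ({a, b} : Finset α).filter (fun x => g x ≠ x) := by
        ext x
        simp only [Finset.mem_inter, Finset.mem_filter, mem_support]
        tauto
      rw [e, Finset.filter_insert, Finset.filter_singleton]
      by_cases ha : g a = a <;> by_cases hb : g b = b <;>
        simp [ha, hb, Finset.card_insert_of_notMem, hab]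
    omega
  rw [key f, key σ, hd]
  omega

end Aux

section Phi

variable {n : ℕ}

/-- The potential function: `|support| + #cycles − (0 or 2)`. -/
noncomputable def phi (π : Perm (Fin (n+1))) : ℤ :=
  (π.support.card : ℤ) + π.cycleFactorsFinset.card - (if π 0 = 0 then 0 else 2)

theorem phi_one : phi (1 : Perm (Fin (n+1))) = 0 := by
  simp [phi]

theorem phi_pos (π : Perm (Fin (n+1))) (hπ : π ≠ 1) : 1 ≤ phi π := by
  have ht : 1 ≤ π.cycleFactorsFinset.card := by
    refine Finset.card_pos.mpr (Finset.nonempty_iff_ne_empty.mpr ?_)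
    exact fun h => hπ (cycleFactorsFinset_eq_empty_iff.mp h)
  by_cases h : π 0 = 0
  · rw [phi, if_pos h]
    omega
  · have h2 : ({0, π 0} : Finset (Fin (n+1))) ⊆ π.support := by
      intro x hx
      rcases Finset.mem_insert.mp hx with rfl | hx
      · exact mem_support.mpr h
      · rw [Finset.mem_singleton] at hx
        subst hx
        exact mem_support.mpr (fun he => h (π.injective he))
    have hm : 2 ≤ π.support.card := by
      calc 2 = ({0, π 0} : Finset (Fin (n+1))).card := (Finset.card_pair (Ne.symm h)).symm
        _ ≤ _ := Finset.card_le_card h2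
    rw [phi, if_neg h]
    omega

theorem phi_le (π : Perm (Fin (n+1))) {j : Fin (n+1)} (hj : j ≠ 0) :
    phi π ≤ phi (π * Equiv.swap 0 j) + 1 := by
  have hab : (0 : Fin (n+1)) ≠ j := Ne.symm hj
  set σ := π * Equiv.swap 0 j with hσdef
  have ht := t_eq π 0 j
  have hm := supp_eq π hab
  rw [← hσdef] at ht hm
  have hσ0 : σ 0 = π j := by
    rw [hσdef]; simp only [Perm.mul_apply, Equiv.swap_apply_left]
  have hσj : σ j = π 0 := by
    rw [hσdef]; simp only [Perm.mul_apply, Equiv.swap_apply_right]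
  by_cases h1 : π 0 = 0 <;> by_cases h2 : π j = j
  · -- both fixed
    have hσ0' : σ 0 ≠ 0 := by rw [hσ0, h2]; exact hj
    have hσj' : σ j ≠ j := by rw [hσj, h1]; exact Ne.symm hj
    rw [if_neg hσ0', if_neg hσj', if_pos h1, if_pos h2] at hm
    have hq : qq π 0 j = 0 := qq_eq_zero h1 h2
    simp only [phi, if_pos h1, if_neg hσ0']
    omega
  · -- 0 fixed, j moved
    have hπj0 : π j ≠ 0 := fun h => hj (π.injective (h.trans h1.symm))
    have hσ0' : σ 0 ≠ 0 := by rw [hσ0]; exact hπj0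
    have hσj' : σ j ≠ j := by rw [hσj, h1]; exact Ne.symm hj
    rw [if_neg hσ0', if_neg hσj', if_pos h1, if_neg h2] at hm
    have hq1 : qq π 0 j ≤ 1 := qq_le_one_left h1 j
    have hq2 : 1 ≤ qq σ 0 j := one_le_qq hσ0' j
    simp only [phi, if_pos h1, if_neg hσ0']
    omega
  · -- 0 moved, j fixed
    have hσ0' : σ 0 ≠ 0 := by rw [hσ0, h2]; exact hj
    have hσj' : σ j ≠ j := by
      rw [hσj]
      intro h
      exact hj (π.injective (h2.trans h.symm))
    rw [if_neg hσ0', if_neg hσj', if_neg h1, if_pos h2] at hm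
    have hq1 := qq_le_two π 0 j
    simp only [phi, if_neg h1, if_neg hσ0']
    omega
  · -- both moved
    by_cases h3 : π j = 0 <;> by_cases h4 : π 0 = j
    · -- transposition (0 j) removed
      have hσ0' : σ 0 = 0 := by rw [hσ0, h3]
      have hσj' : σ j = j := by rw [hσj, h4]
      rw [if_pos hσ0', if_pos hσj', if_neg h1, if_neg h2] at hm
      have hsc : π.SameCycle 0 j := ⟨1, by simpa using h4⟩
      have hq1 : qq π 0 j ≤ 1 := qq_le_one_sameCycle hsc
      simp only [phi, if_neg h1, if_pos hσ0']
      omega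
    · -- 0 removed from its cycle
      have hσ0' : σ 0 = 0 := by rw [hσ0, h3]
      have hσj' : σ j ≠ j := by rw [hσj]; exact h4
      rw [if_pos hσ0', if_neg hσj', if_neg h1, if_neg h2] at hm
      have hq1 := qq_le_two π 0 j
      simp only [phi, if_neg h1, if_pos hσ0']
      omega
    · -- j removed from its cycle
      have hσ0' : σ 0 ≠ 0 := by rw [hσ0]; exact h3
      have hσj' : σ j = j := by rw [hσj, h4]
      rw [if_neg hσ0', if_pos hσj', if_neg h1, if_neg h2] at hm
      have hsc : π.SameCycle 0 j := ⟨1, by simpa using h4⟩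
      have hq1 : qq π 0 j ≤ 1 := qq_le_one_sameCycle hsc
      have hq2 : 1 ≤ qq σ 0 j := one_le_qq hσ0' j
      simp only [phi, if_neg h1, if_neg hσ0']
      omega
    · -- generic merge/split
      have hσ0' : σ 0 ≠ 0 := by rw [hσ0]; exact h3
      have hσj' : σ j ≠ j := by rw [hσj]; exact h4
      rw [if_neg hσ0', if_neg hσj', if_neg h1, if_neg h2] at hm
      have hq1 := qq_le_two π 0 j
      have hq2 : 1 ≤ qq σ 0 j := one_le_qq hσ0' j
      simp only [phi, if_neg h1, if_neg hσ0']
      omega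

theorem phi_step (π : Perm (Fin (n+1))) (hπ : π ≠ 1) :
    ∃ j ≠ 0, phi (π * Equiv.swap 0 j) + 1 ≤ phi π := by
  by_cases h1 : π 0 = 0
  · obtain ⟨j, hj⟩ : ∃ j, π j ≠ j := by
      by_contra h
      push_neg at h
      exact hπ (Equiv.ext h)
    have hj0 : j ≠ 0 := fun h => hj (by rw [h, h1])
    refine ⟨j, hj0, ?_⟩
    have hab : (0 : Fin (n+1)) ≠ j := Ne.symm hj0
    set σ := π * Equiv.swap 0 j with hσdef
    have ht := t_eq π 0 j
    have hm := supp_eq π hab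
    rw [← hσdef] at ht hm
    have hσ0 : σ 0 = π j := by
      rw [hσdef]; simp only [Perm.mul_apply, Equiv.swap_apply_left]
    have hσj : σ j = π 0 := by
      rw [hσdef]; simp only [Perm.mul_apply, Equiv.swap_apply_right]
    have hπj0 : π j ≠ 0 := fun h => hj0 (π.injective (h.trans h1.symm))
    have hσ0' : σ 0 ≠ 0 := by rw [hσ0]; exact hπj0
    have hσj' : σ j ≠ j := by rw [hσj, h1]; exact Ne.symm hj0
    rw [if_neg hσ0', if_neg hσj', if_pos h1, if_neg hj] at hm
    have hsc : σ.SameCycle 0 j := (show σ.SameCycle j 0 from ⟨1, by simpa using hσj.trans h1⟩).symm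
    have hqσ : qq σ 0 j ≤ 1 := qq_le_one_sameCycle hsc
    have hqπ : 1 ≤ qq π 0 j := by rw [qq_comm]; exact one_le_qq hj 0
    simp only [phi, if_pos h1, if_neg hσ0']
    omega
  · refine ⟨π 0, h1, ?_⟩
    have hab : (0 : Fin (n+1)) ≠ π 0 := Ne.symm h1
    set σ := π * Equiv.swap 0 (π 0) with hσdef
    have ht := t_eq π 0 (π 0)
    have hm := supp_eq π hab
    rw [← hσdef] at ht hm
    have hσ0 : σ 0 = π (π 0) := by
      rw [hσdef]; simp only [Perm.mul_apply, Equiv.swap_apply_left]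
    have hσj : σ (π 0) = π 0 := by
      rw [hσdef]; simp only [Perm.mul_apply, Equiv.swap_apply_right]
    have hπx : π (π 0) ≠ π 0 := fun h => h1 (π.injective h)
    by_cases h3 : π (π 0) = 0
    · -- remove the transposition (0, π 0)
      have hσ0' : σ 0 = 0 := by rw [hσ0, h3]
      rw [if_pos hσ0', if_pos hσj, if_neg h1, if_neg hπx] at hm
      have hqσ : qq σ 0 (π 0) = 0 := qq_eq_zero hσ0' hσj
      have hqπ : 1 ≤ qq π 0 (π 0) := one_le_qq h1 _
      simp only [phi, if_neg h1, if_pos hσ0']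
      omega
    · -- place π 0 home
      have hσ0' : σ 0 ≠ 0 := by rw [hσ0]; exact h3
      rw [if_neg hσ0', if_pos hσj, if_neg h1, if_neg hπx] at hm
      have hqσ : qq σ 0 (π 0) ≤ 1 := qq_le_one_right 0 hσj
      have hqπ : 1 ≤ qq π 0 (π 0) := one_le_qq h1 _
      simp only [phi, if_neg h1, if_neg hσ0']
      omega

theorem phi_list_lower : ∀ (l : List (Fin (n+1))) (π : Perm (Fin (n+1))),
    (∀ j ∈ l, j ≠ 0) → π * (l.map (Equiv.swap 0)).prod = 1 → phi π ≤ (l.length : ℤ) := by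
  intro l
  induction l with
  | nil =>
    intro π _ hp
    simp only [List.map_nil, List.prod_nil, mul_one] at hp
    subst hp
    simp [phi_one]
  | cons j l ih =>
    intro π hall hp
    have hj : j ≠ 0 := hall j List.mem_cons_self
    simp only [List.map_cons, List.prod_cons] at hp
    rw [← mul_assoc] at hp
    have h1 := ih (π * Equiv.swap 0 j) (fun i hi => hall i (List.mem_cons_of_mem _ hi)) hp
    have h2 := phi_le π hj
    simp only [List.length_cons]
    push_cast
    omega

theorem phi_list_upper : ∀ (N : ℕ) (π : Perm (Fin (n+1))), phi π = (N : ℤ) →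
    ∃ l : List (Fin (n+1)), l.length = N ∧ (∀ j ∈ l, j ≠ 0) ∧
      π * (l.map (Equiv.swap 0)).prod = 1 := by
  intro N
  induction N with
  | zero =>
    intro π h
    have hπ1 : π = 1 := by
      by_contra hne
      have := phi_pos π hne
      push_cast at h
      omega
    subst hπ1
    exact ⟨[], rfl, by simp, by simp⟩
  | succ N ih =>
    intro π h
    have hne : π ≠ 1 := by
      intro he
      rw [he, phi_one] at h
      push_cast at h
      omega
    obtain ⟨j, hj, hstep⟩ := phi_step π hne
    have hle := phi_le π hj
    have hN : phi (π * Equiv.swap 0 j) = (N : ℤ) := by push_cast at h ⊢; omega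
    obtain ⟨l, hl, hl0, hlp⟩ := ih _ hN
    refine ⟨j :: l, by simp [hl], ?_, ?_⟩
    · intro i hi
      rcases List.mem_cons.mp hi with rfl | hi
      · exact hj
      · exact hl0 _ hi
    · simp only [List.map_cons, List.prod_cons]
      rw [← mul_assoc]
      exact hlp

end Phi

/-- Akers et al.: the prefix exchange distance of an unsigned permutation π of
{1,…,n} equals n + c(Γ(π)) − 2c₁(Γ(π)) − (0 if π(1)=1 else 2).
(0-indexed: permutations of Fin (n+1), position/value 1 is `0`.) -/
theorem prefix_exchange_distance_formula (n : ℕ) (π : Equiv.Perm (Fin (n+1))) :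
    (ped π : ℤ) = (n + 1) + cyc π - 2 * fixpts π - (if π 0 = 0 then 0 else 2) := by
  classical
  have hnn : 0 ≤ phi π := by
    rcases eq_or_ne π 1 with rfl | h
    · rw [phi_one]
    · exact le_trans zero_le_one (phi_pos π h)
  obtain ⟨N, hN⟩ : ∃ N : ℕ, phi π = (N : ℤ) := ⟨(phi π).toNat, (Int.toNat_of_nonneg hnn).symm⟩
  obtain ⟨l, hl, hl0, hlp⟩ := phi_list_upper N π hN
  have hmem : N ∈ {k | ∃ l : List (Fin (n+1)), l.length = k ∧ (∀ j ∈ l, j ≠ 0) ∧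
      π * (l.map (Equiv.swap 0)).prod = 1} := ⟨l, hl, hl0, hlp⟩
  have hped : ped π = N := by
    refine le_antisymm (Nat.sInf_le hmem) (le_csInf ⟨N, hmem⟩ ?_)
    rintro k ⟨l', hl', hl0', hlp'⟩
    have hlow := phi_list_lower l' π hl0' hlp'
    rw [hl', hN] at hlow
    exact_mod_cast hlow
  rw [hped, ← hN]
  have hcyc : π.cycleType.card = π.cycleFactorsFinset.card := by
    rw [cycleType_def, Multiset.card_map]; rfl
  have hfix : π.support.card + (Finset.univ.filter fun i => π i = i).card = n + 1 := by
    have hs : π.support = Finset.univ.filter (fun i => ¬ π i = i) := by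
      ext i; simp [mem_support]
    rw [hs, add_comm]
    have := Finset.card_filter_add_card_filter_not
      (s := (Finset.univ : Finset (Fin (n+1)))) (p := fun i => π i = i)
    simpa using this
  rw [phi, cyc, fixpts]
  by_cases h : π 0 = 0 <;> simp only [h, if_true, if_false, ite_true, ite_false] <;>
    push_cast <;> omega
end

section
/- Let G be an unsigned linear genome (a Hamiltonian path on vertex set {0,1,...,n+1} with endpoints 0 and n+1) and let G' be obtained from G by any finite sequence of prefix DCJ operations. Then G' consists of exactly one path, whose endpoints are 0 and n+1, together with a (possibly empty) collection of vertex-disjoint cycles. -/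
open Classical

/-- The (multiset of) edges of the path visiting the vertices of `l` in order. -/
def pathEdges (l : List ℕ) : Multiset (Sym2 ℕ) :=
  ↑((l.zip l.tail).map fun p => s(p.1, p.2))

/-- `G` is a linear genome on {0,…,n+1}: a Hamiltonian path on {0,…,n+1}
with endpoints 0 and n+1 (genomes are multisets of edges). -/
def IsLinearGenome (n : ℕ) (G : Multiset (Sym2 ℕ)) : Prop :=
  ∃ l : List ℕ, l.Perm (List.range (n+2)) ∧ l.head? = some 0 ∧
    l.getLast? = some (n+1) ∧ G = pathEdges l

/-- The identity genome 0−1−⋯−(n+1). -/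
def identityGenome (n : ℕ) : Multiset (Sym2 ℕ) := pathEdges (List.range (n+2))

/-- `e` is a breakpoint of `G`: 0 ∉ e, and either its endpoints are not
consecutive integers or it has multiplicity at least two in `G`. -/
def IsBp (G : Multiset (Sym2 ℕ)) (e : Sym2 ℕ) : Prop :=
  (∀ x ∈ e, x ≠ 0) ∧ (¬ (∃ u, e = s(u, u+1)) ∨ 2 ≤ G.count e)

/-- The number of breakpoints of `G` (counted with multiplicity). -/
noncomputable def bp (G : Multiset (Sym2 ℕ)) : ℕ :=
  (G.filter fun e => IsBp G e).card

/-- Prefix DCJ: cut the edge {0,v} containing 0 and another edge {w,x},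
and rejoin the four severed endpoints in one of the two alternative ways. -/
def PrefixDCJ (G G' : Multiset (Sym2 ℕ)) : Prop :=
  ∃ v w x, s(0, v) ∈ G ∧ s(w, x) ∈ G.erase s(0, v) ∧
    (G' = ((G.erase s(0, v)).erase s(w, x)) + {s(0, w), s(v, x)} ∨
     G' = ((G.erase s(0, v)).erase s(w, x)) + {s(0, x), s(v, w)})

/-- `reachIn R k a b`: `b` is obtained from `a` by exactly `k` steps of `R`. -/
def reachIn {α : Type*} (R : α → α → Prop) : ℕ → α → α → Prop
  | 0, a, b => a = b
  | (k+1), a, b => ∃ c, R a c ∧ reachIn R k c b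

/-- The edges of the cycle visiting the vertices of `l` in order and closing up. -/
def cycEdges (l : List ℕ) : Multiset (Sym2 ℕ) :=
  pathEdges l + {s(l.getLastD 0, l.headD 0)}

/-- `G` consists of exactly one path, with endpoints 0 and n+1, together with a
(possibly empty) collection of vertex-disjoint cycles, covering {0,…,n+1}. -/
def IsPathPlusCycles (n : ℕ) (G : Multiset (Sym2 ℕ)) : Prop :=
  ∃ (p : List ℕ) (cs : List (List ℕ)),
    p ≠ [] ∧ p.head? = some 0 ∧ p.getLast? = some (n+1) ∧
    (∀ c ∈ cs, c ≠ []) ∧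
    (p ++ cs.flatten).Perm (List.range (n+2)) ∧
    G = pathEdges p + (cs.map cycEdges).sum

/- ### Auxiliary lemmas -/

lemma pathEdges_nil : pathEdges [] = 0 := rfl

lemma pathEdges_single (x : ℕ) : pathEdges [x] = 0 := rfl

lemma pathEdges_cons_cons (x y : ℕ) (l : List ℕ) :
    pathEdges (x :: y :: l) = s(x, y) ::ₘ pathEdges (y :: l) := rfl

lemma getLastD_cons_cons' (x y d : ℕ) (u : List ℕ) :
    (x :: y :: u).getLastD d = (y :: u).getLastD d := by
  simp

lemma getLastD_eq_of_ne_nil (l : List ℕ) (h : l ≠ []) (d d' : ℕ) :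
    l.getLastD d = l.getLastD d' := by
  cases l with
  | nil => exact absurd rfl h
  | cons a t =>
    induction t generalizing a with
    | nil => rfl
    | cons b u ih => simpa using ih b (by simp)

lemma headD_eq_of_ne_nil (l : List ℕ) (h : l ≠ []) (d d' : ℕ) :
    l.headD d = l.headD d' := by
  cases l with
  | nil => exact absurd rfl h
  | cons a t => rfl

lemma headD_append (a b : List ℕ) (h : a ≠ []) (d : ℕ) :
    (a ++ b).headD d = a.headD d := by
  cases a with
  | nil => exact absurd rfl h
  | cons x t => rfl

lemma getLastD_append (a b : List ℕ) (h : b ≠ []) (d : ℕ) :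
    (a ++ b).getLastD d = b.getLastD d := by
  simp [List.getLastD_eq_getLast?, List.getLast?_append_of_ne_nil _ h]

lemma headD_mem (l : List ℕ) (h : l ≠ []) (d : ℕ) : l.headD d ∈ l := by
  cases l with
  | nil => exact absurd rfl h
  | cons x t => simp

lemma getLastD_mem (l : List ℕ) (h : l ≠ []) (d : ℕ) : l.getLastD d ∈ l := by
  cases l with
  | nil => exact absurd rfl h
  | cons a t =>
    induction t generalizing a d with
    | nil => simp
    | cons b u ih =>
      rw [List.getLastD_cons]
      exact List.mem_cons_of_mem _ (ih b b (by simp))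

lemma headD_reverse (l : List ℕ) (d : ℕ) : l.reverse.headD d = l.getLastD d := by
  simp [List.headD_eq_head?_getD, List.getLastD_eq_getLast?, List.head?_reverse]

lemma getLastD_reverse (l : List ℕ) (d : ℕ) : l.reverse.getLastD d = l.headD d := by
  simp [List.headD_eq_head?_getD, List.getLastD_eq_getLast?, List.getLast?_reverse]

lemma pathEdges_cons (x : ℕ) (l : List ℕ) (h : l ≠ []) :
    pathEdges (x :: l) = s(x, l.headD 0) ::ₘ pathEdges l := by
  cases l with
  | nil => exact absurd rfl h
  | cons y t => exact pathEdges_cons_cons x y t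

lemma pathEdges_append (a b : List ℕ) (ha : a ≠ []) (hb : b ≠ []) :
    pathEdges (a ++ b) = pathEdges a + (s(a.getLastD 0, b.headD 0) ::ₘ pathEdges b) := by
  induction a with
  | nil => exact absurd rfl ha
  | cons x t ih =>
    cases t with
    | nil =>
      cases b with
      | nil => exact absurd rfl hb
      | cons y u => simp [pathEdges_cons_cons, pathEdges_single, Multiset.singleton_add]
    | cons y u =>
      have h1 : y :: u ≠ [] := by simp
      have e1 : pathEdges ((x :: y :: u) ++ b) = s(x, y) ::ₘ pathEdges ((y :: u) ++ b) :=
        pathEdges_cons_cons x y (u ++ b)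
      rw [e1, ih h1, pathEdges_cons_cons, getLastD_cons_cons', Multiset.cons_add]

lemma pathEdges_reverse (l : List ℕ) : pathEdges l.reverse = pathEdges l := by
  induction l with
  | nil => rfl
  | cons x t ih =>
    cases t with
    | nil => rfl
    | cons y u =>
      have ht : (y :: u : List ℕ) ≠ [] := by simp
      have hr : (y :: u : List ℕ).reverse ≠ [] := by simp
      rw [List.reverse_cons, pathEdges_append _ [x] hr (by simp), ih,
        pathEdges_single, pathEdges_cons x (y :: u) ht, getLastD_reverse]
      rw [show s((y :: u).headD 0, ([x] : List ℕ).headD 0) = s(x, (y :: u).headD 0) from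
        Sym2.eq_swap]
      rw [add_comm]
      rfl

lemma mem_pathEdges {e : Sym2 ℕ} : ∀ {l : List ℕ}, e ∈ pathEdges l →
    ∃ a b, a ≠ [] ∧ b ≠ [] ∧ l = a ++ b ∧ e = s(a.getLastD 0, b.headD 0) := by
  intro l
  induction l with
  | nil => intro h; exact absurd h (by simp [pathEdges_nil])
  | cons x t ih =>
    cases t with
    | nil => intro h; exact absurd h (by simp [pathEdges_single])
    | cons y u =>
      intro h
      rw [pathEdges_cons_cons, Multiset.mem_cons] at h
      rcases h with h | h
      · exact ⟨[x], y :: u, by simp, by simp, rfl, by simpa using h⟩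
      · obtain ⟨a, b, ha, hb, hab, he⟩ := ih h
        refine ⟨x :: a, b, by simp, hb, by rw [List.cons_append, ← hab], ?_⟩
        have : (x :: a).getLastD 0 = a.getLastD 0 := by
          cases a with
          | nil => exact absurd rfl ha
          | cons z a' => exact getLastD_cons_cons' x z 0 a'
        rw [he, this]

lemma mem_of_mem_pathEdges {y : ℕ} {e : Sym2 ℕ} {l : List ℕ}
    (hy : y ∈ e) (he : e ∈ pathEdges l) : y ∈ l := by
  obtain ⟨a, b, ha, hb, rfl, rfl⟩ := mem_pathEdges he
  rw [Sym2.mem_iff] at hy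
  rcases hy with rfl | rfl
  · exact List.mem_append.2 (Or.inl (getLastD_mem a ha 0))
  · exact List.mem_append.2 (Or.inr (headD_mem b hb 0))

lemma mem_map_sum {e : Sym2 ℕ} : ∀ {cs : List (List ℕ)},
    e ∈ (cs.map cycEdges).sum → ∃ c ∈ cs, e ∈ cycEdges c := by
  intro cs
  induction cs with
  | nil => intro h; exact absurd h (by simp)
  | cons c cs ih =>
    intro h
    rw [List.map_cons, List.sum_cons, Multiset.mem_add] at h
    rcases h with h | h
    · exact ⟨c, by simp, h⟩
    · obtain ⟨d, hd, hh⟩ := ih h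
      exact ⟨d, by simp [hd], hh⟩

lemma mem_of_mem_cycEdges {y : ℕ} {e : Sym2 ℕ} {c : List ℕ}
    (hc : c ≠ []) (hy : y ∈ e) (he : e ∈ cycEdges c) : y ∈ c := by
  rw [cycEdges, Multiset.mem_add] at he
  rcases he with he | he
  · exact mem_of_mem_pathEdges hy he
  · rw [Multiset.mem_singleton] at he
    subst he
    rw [Sym2.mem_iff] at hy
    rcases hy with rfl | rfl
    · exact getLastD_mem c hc 0
    · exact headD_mem c hc 0

lemma coe_append' (l m : List ℕ) : (↑(l ++ m) : Multiset ℕ) = ↑l + ↑m :=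
  (Multiset.coe_add l m).symm

lemma coe_cons' (a : ℕ) (l : List ℕ) : (↑(a :: l) : Multiset ℕ) = a ::ₘ ↑l :=
  (Multiset.cons_coe a l).symm

lemma perm_of_coe {l₁ l₂ : List ℕ} (h : (↑l₁ : Multiset ℕ) = ↑l₂) : l₁.Perm l₂ :=
  Multiset.coe_eq_coe.1 h

lemma cyc_split {e : Sym2 ℕ} {c : List ℕ} (hc : c ≠ []) (he : e ∈ cycEdges c) :
    ∃ q : List ℕ, q ≠ [] ∧ q.Perm c ∧
      cycEdges c = e ::ₘ pathEdges q ∧ e = s(q.getLastD 0, q.headD 0) := by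
  rw [cycEdges, Multiset.mem_add] at he
  rcases he with he | he
  · obtain ⟨a, b, ha, hb, rfl, rfl⟩ := mem_pathEdges he
    refine ⟨b ++ a, by simp [hb], List.perm_append_comm, ?_, ?_⟩
    · rw [cycEdges, pathEdges_append a b ha hb, pathEdges_append b a hb ha,
        getLastD_append a b hb 0, headD_append a b ha 0]
      simp only [← Multiset.singleton_add]
      abel
    · rw [getLastD_append b a ha 0, headD_append b a hb 0]
  · rw [Multiset.mem_singleton] at he
    subst he
    refine ⟨c, hc, List.Perm.refl c, ?_, rfl⟩
    rw [cycEdges, add_comm, Multiset.singleton_add]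

lemma base_case {n : ℕ} {G : Multiset (Sym2 ℕ)} (h : IsLinearGenome n G) :
    IsPathPlusCycles n G := by
  obtain ⟨l, hperm, hh, hl, rfl⟩ := h
  refine ⟨l, [], ?_, hh, hl, by simp, by simpa using hperm, by simp⟩
  intro h
  subst h
  simp at hh

lemma step_case (n : ℕ) {G G' : Multiset (Sym2 ℕ)} (h : IsPathPlusCycles n G)
    (hd : PrefixDCJ G G') : IsPathPlusCycles n G' := by
  obtain ⟨p, cs, hp0, hh, hl, hcs, hperm, rfl⟩ := h
  obtain ⟨v, w, x, h0v, hwx, hre⟩ := hd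
  have hnodup : (p ++ cs.flatten).Nodup := hperm.nodup_iff.2 List.nodup_range
  have hnp : p.Nodup := (List.nodup_append.1 hnodup).1
  have hdisj : p.Disjoint cs.flatten := fun a ha hb => (List.nodup_append.1 hnodup).2.2 a ha a hb rfl
  obtain ⟨p1, rfl⟩ : ∃ p1, p = 0 :: p1 := by
    cases p with
    | nil => simp at hh
    | cons z p1 =>
      have : z = 0 := by simpa using hh
      exact ⟨p1, by rw [this]⟩
  have h0f : (0 : ℕ) ∉ cs.flatten := fun hmem => hdisj (by simp) hmem
  have h0path : s(0, v) ∈ pathEdges (0 :: p1) := by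
    rcases Multiset.mem_add.1 h0v with h | h
    · exact h
    · exfalso
      obtain ⟨c, hcmem, hec⟩ := mem_map_sum h
      exact h0f (List.mem_flatten.2
        ⟨c, hcmem, mem_of_mem_cycEdges (hcs c hcmem) (by simp) hec⟩)
  obtain ⟨a, b, ha, hb, hab, hev⟩ := mem_pathEdges h0path
  obtain ⟨a', rfl⟩ : ∃ a', a = 0 :: a' := by
    cases a with
    | nil => exact absurd rfl ha
    | cons z a' =>
      rw [List.cons_append] at hab
      injection hab with h1 _
      exact ⟨a', by rw [h1]⟩
  have hd2 := List.nodup_append.1 (hab ▸ hnp)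
  have hva : a' = [] ∧ v = b.headD 0 := by
    rcases Sym2.eq_iff.1 hev with ⟨h1, h2⟩ | ⟨h1, h2⟩
    · refine ⟨?_, h2⟩
      by_contra ha'
      have hL : (0 :: a').getLastD 0 = a'.getLastD 0 := by
        cases a' with
        | nil => exact absurd rfl ha'
        | cons z a'' => exact getLastD_cons_cons' 0 z 0 a''
      rw [hL] at h1
      have : (0:ℕ) ∈ a' := by rw [h1]; exact getLastD_mem a' ha' 0
      exact (List.nodup_cons.1 hd2.1).1 this
    · exfalso
      have h0b : (0:ℕ) ∈ b := by rw [h1]; exact headD_mem b hb 0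
      exact hd2.2.2 0 (by simp) 0 h0b rfl
  obtain ⟨rfl, hvb⟩ := hva
  obtain ⟨t, rfl⟩ : ∃ t, b = v :: t := by
    cases b with
    | nil => exact absurd rfl hb
    | cons b0 t =>
      have : v = b0 := hvb
      exact ⟨t, by rw [this]⟩
  have hp1 : p1 = v :: t := by simpa using hab
  subst hp1
  clear hab hev hvb hd2 h0path h0v ha hb hnodup hnp hdisj hp0 hh
  have herase1 :
      (pathEdges (0 :: v :: t) + (cs.map cycEdges).sum).erase s(0, v) =
        pathEdges (v :: t) + (cs.map cycEdges).sum := by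
    rw [pathEdges_cons_cons, Multiset.cons_add, Multiset.erase_cons_head]
  rw [herase1] at hwx hre
  rcases Multiset.mem_add.1 hwx with hA | hB
  · -- the second cut edge lies on the path
    obtain ⟨c, d, hc, hd, hcd, hewx⟩ := mem_pathEdges hA
    have hcne : c.reverse ≠ [] := by simpa using hc
    have hchead : c.headD 0 = v := by
      cases c with
      | nil => exact absurd rfl hc
      | cons c0 c' =>
        rw [List.cons_append] at hcd
        injection hcd with h1 _
        exact h1.symm
    have hM : pathEdges (v :: t) + (cs.map cycEdges).sum =
        s(c.getLastD 0, d.headD 0) ::ₘ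
          (pathEdges c + pathEdges d + (cs.map cycEdges).sum) := by
      rw [hcd, pathEdges_append c d hc hd]
      simp only [← Multiset.singleton_add]
      abel
    have herase2 :
        (pathEdges (v :: t) + (cs.map cycEdges).sum).erase s(w, x) =
          pathEdges c + pathEdges d + (cs.map cycEdges).sum := by
      rw [hewx, hM, Multiset.erase_cons_head]
    rw [herase2] at hre
    have hld : d.getLast? = some (n+1) := by
      rw [show (0 :: v :: t) = (0 :: c) ++ d by rw [hcd, List.cons_append],
        List.getLast?_append_of_ne_nil _ hd] at hl
      exact hl
    have key :
        (pathEdges c + pathEdges d + (cs.map cycEdges).sum) +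
            {s(0, c.getLastD 0), s(v, d.headD 0)} = pathEdges (0 :: (c.reverse ++ d)) +
            (cs.map cycEdges).sum →
        (pathEdges c + pathEdges d + (cs.map cycEdges).sum) +
            {s(0, d.headD 0), s(v, c.getLastD 0)} = pathEdges (0 :: d) +
            ((c :: cs).map cycEdges).sum →
        IsPathPlusCycles n G' := by
      intro hstraight hsplit
      have hG' : G' = (pathEdges c + pathEdges d + (cs.map cycEdges).sum) +
            {s(0, c.getLastD 0), s(v, d.headD 0)} ∨
          G' = (pathEdges c + pathEdges d + (cs.map cycEdges).sum) +
            {s(0, d.headD 0), s(v, c.getLastD 0)} := by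
        rcases Sym2.eq_iff.1 hewx with ⟨rfl, rfl⟩ | ⟨rfl, rfl⟩
        · exact hre
        · exact hre.symm
      rcases hG' with rfl | rfl
      · refine ⟨0 :: (c.reverse ++ d), cs, by simp, rfl, ?_, hcs, ?_, ?_⟩
        · rw [show (0 :: (c.reverse ++ d)) = (0 :: c.reverse) ++ d from rfl,
            List.getLast?_append_of_ne_nil _ hd]
          exact hld
        · refine List.Perm.trans ?_ hperm
          refine List.Perm.append_right _ ?_
          refine List.Perm.cons 0 ?_
          rw [hcd]
          exact List.Perm.append_right d (List.reverse_perm c)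
        · exact hstraight
      · refine ⟨0 :: d, c :: cs, by simp, rfl, ?_, ?_, ?_, ?_⟩
        · rw [show (0 :: d) = [0] ++ d from rfl, List.getLast?_append_of_ne_nil _ hd]
          exact hld
        · intro c' hc'
          rcases List.mem_cons.1 hc' with rfl | hc'
          · exact hc
          · exact hcs c' hc'
        · refine List.Perm.trans (perm_of_coe ?_) hperm
          rw [hcd]
          simp only [List.flatten_cons, coe_append', coe_cons',
            ← Multiset.singleton_add]
          abel
        · exact hsplit
    refine key ?_ ?_
    · rw [pathEdges_cons _ _ (by simp [hcne]),
        pathEdges_append _ _ hcne hd, pathEdges_reverse,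
        headD_append _ _ hcne, headD_reverse, getLastD_reverse, hchead]
      simp only [← Multiset.singleton_add]
      abel
    · rw [List.map_cons, List.sum_cons, pathEdges_cons _ _ hd, cycEdges, hchead,
        show s(v, c.getLastD 0) = s(c.getLastD 0, v) from Sym2.eq_swap]
      simp only [← Multiset.singleton_add]
      abel
  · -- the second cut edge lies on a cycle
    obtain ⟨c, hcmem, hec⟩ := mem_map_sum hB
    have hcne : c ≠ [] := hcs c hcmem
    obtain ⟨q, hq0, hqperm, hcyc, heq⟩ := cyc_split hcne hec
    have hqr : q.reverse ≠ [] := by simpa using hq0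
    obtain ⟨cs₁, cs₂, rfl⟩ := List.append_of_mem hcmem
    have hSig : ((cs₁ ++ c :: cs₂).map cycEdges).sum =
        cycEdges c + ((cs₁ ++ cs₂).map cycEdges).sum := by
      simp only [List.map_append, List.map_cons, List.sum_append, List.sum_cons]
      abel
    have hM : pathEdges (v :: t) + ((cs₁ ++ c :: cs₂).map cycEdges).sum =
        s(q.getLastD 0, q.headD 0) ::ₘ
          (pathEdges (v :: t) + pathEdges q + ((cs₁ ++ cs₂).map cycEdges).sum) := by
      rw [hSig, hcyc, heq]
      simp only [← Multiset.singleton_add]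
      abel
    have herase2 :
        (pathEdges (v :: t) + ((cs₁ ++ c :: cs₂).map cycEdges).sum).erase s(w, x) =
          pathEdges (v :: t) + pathEdges q + ((cs₁ ++ cs₂).map cycEdges).sum := by
      rw [heq, hM, Multiset.erase_cons_head]
    rw [herase2] at hre
    have hlv : (v :: t).getLast? = some (n+1) := by
      rw [show (0 :: v :: t) = [0] ++ (v :: t) from rfl,
        List.getLast?_append_of_ne_nil _ (by simp)] at hl
      exact hl
    have hcsrest : ∀ c' ∈ cs₁ ++ cs₂, c' ≠ [] := by
      intro c' hc'
      refine hcs c' ?_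
      rcases List.mem_append.1 hc' with h | h
      · exact List.mem_append.2 (Or.inl h)
      · exact List.mem_append.2 (Or.inr (List.mem_cons_of_mem _ h))
    have hqc : (↑q : Multiset ℕ) = ↑c := Multiset.coe_eq_coe.2 hqperm
    have key :
        (pathEdges (v :: t) + pathEdges q + ((cs₁ ++ cs₂).map cycEdges).sum) +
            {s(0, q.getLastD 0), s(v, q.headD 0)} =
          pathEdges (0 :: (q.reverse ++ v :: t)) + ((cs₁ ++ cs₂).map cycEdges).sum →
        (pathEdges (v :: t) + pathEdges q + ((cs₁ ++ cs₂).map cycEdges).sum) +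
            {s(0, q.headD 0), s(v, q.getLastD 0)} =
          pathEdges (0 :: (q ++ v :: t)) + ((cs₁ ++ cs₂).map cycEdges).sum →
        IsPathPlusCycles n G' := by
      intro hfirst hsecond
      have hG' : G' = (pathEdges (v :: t) + pathEdges q +
              ((cs₁ ++ cs₂).map cycEdges).sum) + {s(0, q.getLastD 0), s(v, q.headD 0)} ∨
          G' = (pathEdges (v :: t) + pathEdges q +
              ((cs₁ ++ cs₂).map cycEdges).sum) + {s(0, q.headD 0), s(v, q.getLastD 0)} := by
        rcases Sym2.eq_iff.1 heq with ⟨rfl, rfl⟩ | ⟨rfl, rfl⟩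
        · exact hre
        · exact hre.symm
      have hpermgen : ∀ r : List ℕ, r.Perm q →
          ((0 :: (r ++ v :: t)) ++ (cs₁ ++ cs₂).flatten).Perm (List.range (n+2)) := by
        intro r hr
        refine List.Perm.trans (perm_of_coe ?_) hperm
        have hrc : (↑r : Multiset ℕ) = ↑c := by
          rw [Multiset.coe_eq_coe.2 hr, hqc]
        simp only [List.flatten_append, List.flatten_cons, coe_append', coe_cons', hrc,
          ← Multiset.singleton_add]
        abel
      rcases hG' with rfl | rfl
      · refine ⟨0 :: (q.reverse ++ v :: t), cs₁ ++ cs₂, by simp, rfl, ?_, hcsrest,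
          hpermgen q.reverse (List.reverse_perm q), hfirst⟩
        rw [show (0 :: (q.reverse ++ v :: t)) = (0 :: q.reverse) ++ (v :: t) from rfl,
          List.getLast?_append_of_ne_nil _ (by simp)]
        exact hlv
      · refine ⟨0 :: (q ++ v :: t), cs₁ ++ cs₂, by simp, rfl, ?_, hcsrest,
          hpermgen q (List.Perm.refl q), hsecond⟩
        rw [show (0 :: (q ++ v :: t)) = (0 :: q) ++ (v :: t) from rfl,
          List.getLast?_append_of_ne_nil _ (by simp)]
        exact hlv
    refine key ?_ ?_
    · rw [pathEdges_cons 0 (q.reverse ++ v :: t) (by simp [hqr]),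
        pathEdges_append q.reverse (v :: t) hqr (by simp), pathEdges_reverse,
        headD_append _ _ hqr, headD_reverse, getLastD_reverse,
        show s(v, q.headD 0) = s(q.headD 0, v) from Sym2.eq_swap]
      simp only [← Multiset.singleton_add]
      abel
    · rw [pathEdges_cons 0 (q ++ v :: t) (by simp [hq0]),
        pathEdges_append q (v :: t) hq0 (by simp),
        headD_append _ _ hq0,
        show s(v, q.getLastD 0) = s(q.getLastD 0, v) from Sym2.eq_swap]
      simp only [← Multiset.singleton_add]
      abel

/-- Any genome obtained from a linear genome by a finite sequence of prefix DCJs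
consists of exactly one path, with endpoints 0 and n+1, plus vertex-disjoint cycles. -/
theorem prefixDCJ_preserves_path_plus_cycles (n : ℕ) (G G' : Multiset (Sym2 ℕ)) (k : ℕ)
    (hG : IsLinearGenome n G) (h : reachIn PrefixDCJ k G G') :
    IsPathPlusCycles n G' := by
  have hb : IsPathPlusCycles n G := base_case hG
  clear hG
  induction k generalizing G with
  | zero => exact (show G = G' from h) ▸ hb
  | succ k ih =>
    obtain ⟨c, h1, h2⟩ := (h : ∃ c, PrefixDCJ G c ∧ reachIn PrefixDCJ k c G')
    exact ih c h2 (step_case n hb h1)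
end

section
/- Let G be an unsigned linear genome on {0,...,n+1} that is not the identity and such that the edge incident to 0 is {0,v} with v ≠ 1. Then there exists a prefix DCJ transforming G into a genome G' with b(G') = b(G) − 1, where b denotes the number of breakpoints. -/
open Classical

lemma mem_pathEdges_s5 {l : List ℕ} {e : Sym2 ℕ} :
    e ∈ pathEdges l ↔ ∃ i, i + 1 < l.length ∧ e = s(l.getD i 0, l.getD (i+1) 0) := by
  unfold pathEdges
  rw [Multiset.mem_coe, List.mem_map]
  constructor
  · rintro ⟨p, hp, rfl⟩
    obtain ⟨i, hi, hpi⟩ := List.mem_iff_getElem.mp hp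
    have hiz : i < l.length ⊓ l.tail.length := by rwa [List.length_zip] at hi
    have hi1 : i + 1 < l.length := by
      have := le_min_iff.mp hiz.le
      simp [List.length_tail] at hiz
      omega
    refine ⟨i, hi1, ?_⟩
    have : (l.zip l.tail)[i] = (l[i], l.tail[i]'(by simp [List.length_tail]; omega)) :=
      List.getElem_zip
    rw [this] at hpi
    rw [List.getElem_tail] at hpi
    rw [← hpi, List.getD_eq_getElem l 0 (show i < l.length by omega),
      List.getD_eq_getElem l 0 hi1]
  · rintro ⟨i, hi1, rfl⟩
    refine ⟨(l[i]'(by omega), l[i+1]'hi1), ?_, ?_⟩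
    · rw [List.mem_iff_getElem]
      refine ⟨i, by simp [List.length_zip, List.length_tail]; omega, ?_⟩
      rw [List.getElem_zip, List.getElem_tail]
    · rw [List.getD_eq_getElem l 0 (show i < l.length by omega),
        List.getD_eq_getElem l 0 hi1]

lemma nodup_pathEdges {l : List ℕ} (h : l.Nodup) : (pathEdges l).Nodup := by
  show ((l.zip l.tail).map fun p => s(p.1, p.2)).Nodup
  rw [List.nodup_iff_injective_get]
  intro i j hij
  have hgi : ∀ (k : Fin ((l.zip l.tail).map fun p => s(p.1, p.2)).length),
      (((l.zip l.tail).map fun p => s(p.1, p.2)).get k) =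
        s(l[(k:ℕ)]'(by have := k.2; simp [List.length_zip, List.length_tail] at this; omega),
          l[(k:ℕ)+1]'(by have := k.2; simp [List.length_zip, List.length_tail] at this; omega)) := by
    intro k
    have hk := k.2
    simp only [List.get_eq_getElem, List.getElem_map]
    rw [show (l.zip l.tail)[(k:ℕ)]'(by simpa using hk) =
      (l[(k:ℕ)]'(by simp [List.length_zip, List.length_tail] at hk; omega),
       l.tail[(k:ℕ)]'(by simp [List.length_zip, List.length_tail] at hk; simp [List.length_tail]; omega)) from List.getElem_zip]
    rw [List.getElem_tail]
  rw [hgi i, hgi j] at hij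
  have hinj : ∀ a b : ℕ, (ha : a < l.length) → (hb : b < l.length) → l[a] = l[b] → a = b := by
    intro a b ha hb hab
    have := (List.Nodup.get_inj_iff h (i := ⟨a, ha⟩) (j := ⟨b, hb⟩)).mp (by simpa using hab)
    simpa using this
  have hil : (i:ℕ) < ((l.zip l.tail).map fun p => s(p.1, p.2)).length := i.2
  have hjl : (j:ℕ) < ((l.zip l.tail).map fun p => s(p.1, p.2)).length := j.2
  simp [List.length_zip, List.length_tail] at hil hjl
  rw [Sym2.eq_iff] at hij
  apply Fin.ext
  rcases hij with ⟨h1, _⟩ | ⟨h1, h2⟩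
  · exact hinj _ _ _ _ h1
  · have e1 := hinj _ _ (by omega) (by omega) h1
    have e2 := hinj _ _ (by omega) (by omega) h2
    omega

lemma key (G : Multiset (Sym2 ℕ)) (hnd : G.Nodup) (v u w : ℕ)
    (hA : s(0,v) ∈ G) (hB : s(w,u) ∈ G) (hw0 : w ≠ 0) (hu0 : u ≠ 0) (hv0 : v ≠ 0)
    (h1 : w + 1 ≠ u) (h2 : u + 1 ≠ w) (hcons : ∃ k, s(v,u) = s(k,k+1))
    (hvu : s(v,u) ∉ G) :
    ∃ G', PrefixDCJ G G' ∧ bp G' + 1 = bp G := by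
  set A : Sym2 ℕ := s(0,v) with hAdef
  set B : Sym2 ℕ := s(w,u) with hBdef
  have hBA : B ≠ A := by
    rw [hBdef, hAdef, ne_eq, Sym2.eq_iff]
    rintro (⟨h1', h2'⟩ | ⟨h1', h2'⟩) <;> omega
  have hBe : B ∈ G.erase A := (Multiset.mem_erase_of_ne hBA).mpr hB
  set R : Multiset (Sym2 ℕ) := (G.erase A).erase B with hRdef
  set A' : Sym2 ℕ := s(0,w) with hA'def
  set B' : Sym2 ℕ := s(v,u) with hB'def
  set G' : Multiset (Sym2 ℕ) := R + {A', B'} with hG'def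
  have hGdec : G = A ::ₘ B ::ₘ R := by
    rw [hRdef, Multiset.cons_erase hBe, Multiset.cons_erase hA]
  have hG'dec : G' = A' ::ₘ B' ::ₘ R := by
    rw [hG'def]
    rw [show ({A', B'} : Multiset (Sym2 ℕ)) = A' ::ₘ B' ::ₘ 0 from rfl]
    rw [add_comm]
    simp [Multiset.cons_add]
  have hRG : R ≤ G := le_trans (Multiset.erase_le _ _) (Multiset.erase_le _ _)
  -- count facts
  have hcntG : ∀ e ∈ G, G.count e = 1 := fun e he => Multiset.count_eq_one_of_mem hnd he
  have hB'A' : B' ≠ A' := by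
    rw [hB'def, hA'def, ne_eq, Sym2.eq_iff]
    rintro (⟨h1', h2'⟩ | ⟨h1', h2'⟩) <;> omega
  have hB'R : B' ∉ R := fun h => hvu (Multiset.mem_of_le hRG h)
  have hcntB' : G'.count B' = 1 := by
    rw [hG'dec, Multiset.count_cons, Multiset.count_cons]
    rw [if_neg hB'A', if_pos rfl]
    rw [Multiset.count_eq_zero_of_notMem hB'R]
  -- IsBp facts
  have notBpA : ¬ IsBp G A := fun ⟨h, _⟩ => h 0 (by rw [hAdef]; simp) rfl
  have notBpA' : ¬ IsBp G' A' := fun ⟨h, _⟩ => h 0 (by rw [hA'def]; simp) rfl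
  have bpB : IsBp G B := by
    refine ⟨?_, Or.inl ?_⟩
    · intro x hx
      rw [hBdef, Sym2.mem_iff] at hx
      rcases hx with rfl | rfl <;> assumption
    · rintro ⟨k, hk⟩
      rw [hBdef, Sym2.eq_iff] at hk
      omega
  have notBpB' : ¬ IsBp G' B' := by
    rintro ⟨_, h | h⟩
    · exact h hcons
    · omega
  -- pointwise
  have hpt : ∀ e ∈ R, (IsBp G e ↔ IsBp G' e) := by
    intro e he
    by_cases h0 : ∀ x ∈ e, x ≠ 0
    · have heG : e ∈ G := Multiset.mem_of_le hRG he
      have hcG : G.count e = 1 := hcntG e heG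
      have heA' : e ≠ A' := by
        intro h; exact h0 0 (by rw [h, hA'def]; simp) rfl
      have heB' : e ≠ B' := fun h => hvu (h ▸ heG)
      have hcR : R.count e = 1 := by
        have h1' : 1 ≤ R.count e := Multiset.one_le_count_iff_mem.mpr he
        have h2' : R.count e ≤ G.count e := Multiset.count_le_of_le e hRG
        omega
      have hcG' : G'.count e = 1 := by
        rw [hG'dec, Multiset.count_cons, Multiset.count_cons, if_neg heB', if_neg heA', hcR]
      unfold IsBp
      rw [hcG, hcG']
    · unfold IsBp; simp [h0]
  -- assemble
  refine ⟨G', ⟨v, w, u, hA, hBe, Or.inl rfl⟩, ?_⟩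
  have hfilt : (Multiset.filter (fun e => IsBp G e) R).card
      = (Multiset.filter (fun e => IsBp G' e) R).card := by
    rw [Multiset.filter_congr hpt]
  unfold bp
  have e1 : Multiset.filter (fun e => IsBp G e) G
      = Multiset.filter (fun e => IsBp G e) (A ::ₘ B ::ₘ R) := congrArg _ hGdec
  have e2 : Multiset.filter (fun e => IsBp G' e) G'
      = Multiset.filter (fun e => IsBp G' e) (A' ::ₘ B' ::ₘ R) := congrArg _ hG'dec
  rw [e1, e2]
  rw [Multiset.filter_cons, Multiset.filter_cons, Multiset.filter_cons, Multiset.filter_cons]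
  rw [if_neg notBpA, if_pos bpB, if_neg notBpA', if_neg notBpB']
  simp only [Multiset.card_add, Multiset.card_singleton, Multiset.card_zero]
  omega

/-- If a linear genome `G` is not the identity and the edge at 0 is {0,v} with v ≠ 1,
then some prefix DCJ decreases the number of breakpoints by exactly one. -/
theorem exists_prefixDCJ_decreasing_breakpoints (n : ℕ) (G : Multiset (Sym2 ℕ)) (v : ℕ)
    (hG : IsLinearGenome n G) (hid : G ≠ identityGenome n)
    (hv : s(0, v) ∈ G) (hv1 : v ≠ 1) :
    ∃ G', PrefixDCJ G G' ∧ bp G' + 1 = bp G := by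
  obtain ⟨l, hperm, hhead, hlast, hGl⟩ := hG
  subst hGl
  have hlen : l.length = n + 2 := by rw [hperm.length_eq, List.length_range]
  have hnd : l.Nodup := hperm.nodup_iff.mpr List.nodup_range
  have hne : l ≠ [] := by intro h; rw [h] at hlen; simp at hlen
  have hmem : ∀ x, x ∈ l ↔ x < n + 2 := fun x => by
    rw [hperm.mem_iff, List.mem_range]
  have hfmem : ∀ i, i < n + 2 → l.getD i 0 < n + 2 := by
    intro i hi
    rw [List.getD_eq_getElem l 0 (by omega : i < l.length)]
    exact (hmem _).mp (List.getElem_mem _)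
  have finj : ∀ i j, i < n + 2 → j < n + 2 → l.getD i 0 = l.getD j 0 → i = j := by
    intro i j hi hj hij
    rw [List.getD_eq_getElem l 0 (by omega : i < l.length),
        List.getD_eq_getElem l 0 (by omega : j < l.length)] at hij
    have := (List.Nodup.get_inj_iff hnd (i := ⟨i, by omega⟩) (j := ⟨j, by omega⟩)).mp
      (by simpa using hij)
    simpa using this
  have hfsurj : ∀ x, x < n + 2 → ∃ i, i < n + 2 ∧ l.getD i 0 = x := by
    intro x hx
    obtain ⟨i, hi, hix⟩ := List.mem_iff_getElem.mp ((hmem x).mpr hx)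
    exact ⟨i, by omega, by rw [List.getD_eq_getElem l 0 hi]; exact hix⟩
  have hmemE : ∀ e : Sym2 ℕ, e ∈ pathEdges l ↔
      ∃ i, i + 1 < n + 2 ∧ e = s(l.getD i 0, l.getD (i+1) 0) := by
    intro e; rw [mem_pathEdges_s5, hlen]
  have hedge : ∀ i, i + 1 < n + 2 → s(l.getD i 0, l.getD (i+1) 0) ∈ pathEdges l :=
    fun i hi => (hmemE _).mpr ⟨i, hi, rfl⟩
  have hf0 : l.getD 0 0 = 0 := by
    rw [List.getD_eq_getElem l 0 (by omega : 0 < l.length), ← List.head_eq_getElem hne]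
    have := List.head?_eq_head hne
    rw [hhead] at this
    exact (Option.some_injective _ this.symm)
  have hfN : l.getD (n+1) 0 = n + 1 := by
    rw [List.getD_eq_getElem l 0 (by omega : n + 1 < l.length)]
    have h1 := List.getLast?_eq_getLast hne
    rw [hlast] at h1
    have h2 : l.getLast hne = l[n+1]'(by omega) := by
      rw [List.getLast_eq_getElem]
      congr 1
      omega
    rw [h2] at h1
    exact (Option.some_injective _ h1.symm)
  -- v = l[1]
  have hf1 : l.getD 1 0 = v := by
    obtain ⟨i, hi, he⟩ := (hmemE _).mp hv
    rw [Sym2.eq_iff] at he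
    rcases he with ⟨h0, hv'⟩ | ⟨h0, hv'⟩
    · have : i = 0 := finj i 0 (by omega) (by omega) (by rw [hf0, ← h0])
      subst this; exact hv'.symm
    · exfalso
      have : i + 1 = 0 := finj (i+1) 0 (by omega) (by omega) (by rw [hf0, ← h0])
      omega
  have hv0 : v ≠ 0 := by
    intro h
    have := finj 1 0 (by omega) (by omega) (by rw [hf0, hf1, h])
    omega
  have hn1 : 1 ≤ n := by
    by_contra h
    have : n = 0 := by omega
    subst this
    rw [show (0:ℕ) + 1 = 1 from rfl] at hfN
    rw [hf1] at hfN
    exact hv1 hfN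
  have hvub : v ≤ n := by
    have h1 : v < n + 2 := by rw [← hf1]; exact hfmem 1 (by omega)
    have h2 : v ≠ n + 1 := by
      intro h
      have := finj 1 (n+1) (by omega) (by omega) (by rw [hf1, hfN, h])
      omega
    omega
  have hv2 : 2 ≤ v := by omega
  have hn2 : 2 ≤ n := by omega
  -- neighbors of v
  have hv_adj : ∀ w', s(v, w') ∈ pathEdges l → w' = 0 ∨ w' = l.getD 2 0 := by
    intro w' hw'
    obtain ⟨i, hi, he⟩ := (hmemE _).mp hw'
    rw [Sym2.eq_iff] at he
    rcases he with ⟨h0, hv'⟩ | ⟨h0, hv'⟩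
    · have : i = 1 := finj i 1 (by omega) (by omega) (by rw [hf1, ← h0])
      subst this; right; exact hv'
    · have : i + 1 = 1 := finj (i+1) 1 (by omega) (by omega) (by rw [hf1, ← h0])
      have hi0 : i = 0 := by omega
      subst hi0; left; rw [hv', hf0]
  -- position of v-1
  obtain ⟨j, hj, hfj⟩ := hfsurj (v-1) (by omega)
  have hj0 : j ≠ 0 := by
    intro h; subst h; rw [hf0] at hfj; omega
  have hj1 : j ≠ 1 := by
    intro h; subst h; rw [hf1] at hfj; omega
  have hjN : j ≠ n + 1 := by
    intro h; subst h; rw [hfN] at hfj; omega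
  by_cases hj2 : j = 2
  · -- v adjacent to v-1; use u = v+1
    subst hj2
    obtain ⟨k, hk, hfk⟩ := hfsurj (v+1) (by omega)
    have hk0 : k ≠ 0 := by intro h; subst h; rw [hf0] at hfk; omega
    have hk1 : k ≠ 1 := by intro h; subst h; rw [hf1] at hfk; omega
    have hk2 : k ≠ 2 := by
      intro h; subst h; rw [hfj] at hfk; omega
    have hvq_not : s(v, v+1) ∉ pathEdges l := by
      intro h
      rcases hv_adj _ h with h' | h'
      · omega
      · rw [hfj] at h'; omega
    have hcons : ∃ m, s(v, v+1) = s(m, m+1) := ⟨v, rfl⟩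
    by_cases hkN : k = n + 1
    · -- v+1 = n+1, w = l[n]
      subst hkN
      have hq : v + 1 = n + 1 := by rw [← hfk, hfN]
      have hwe : s(l.getD n 0, v+1) ∈ pathEdges l := by
        have h5 := hedge n (by omega)
        rw [hfN, ← hq] at h5
        exact h5
      have hw0 : l.getD n 0 ≠ 0 := by
        intro h
        have := finj n 0 (by omega) (by omega) (by rw [hf0, h])
        omega
      have hwv : l.getD n 0 ≠ v := by
        intro h
        have := finj n 1 (by omega) (by omega) (by rw [hf1, h])
        omega
      have hwlt : l.getD n 0 < n + 2 := hfmem n (by omega)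
      exact key _ (nodup_pathEdges hnd) v (v+1) (l.getD n 0) hv hwe hw0 (by omega) hv0
        (by omega) (by omega) hcons hvq_not
    · -- 3 ≤ k ≤ n
      have hk3 : 3 ≤ k := by omega
      have hkn : k ≤ n := by omega
      obtain ⟨a, hadef⟩ : ∃ a, l.getD (k-1) 0 = a := ⟨_, rfl⟩
      obtain ⟨b, hbdef⟩ : ∃ b, l.getD (k+1) 0 = b := ⟨_, rfl⟩
      have ha_edge : s(a, v+1) ∈ pathEdges l := by
        have h5 := hedge (k-1) (by omega)
        rw [show k - 1 + 1 = k by omega, hfk, hadef] at h5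
        exact h5
      have hb_edge : s(b, v+1) ∈ pathEdges l := by
        have h5 := hedge k (by omega)
        rw [hfk, hbdef] at h5
        rw [Sym2.eq_swap]
        exact h5
      have hab : a ≠ b := by
        intro h
        have := finj (k-1) (k+1) (by omega) (by omega) (by rw [hadef, hbdef, h])
        omega
      have ha0 : a ≠ 0 := by
        intro h
        have := finj (k-1) 0 (by omega) (by omega) (by rw [hadef, hf0, h])
        omega
      have hb0 : b ≠ 0 := by
        intro h
        have := finj (k+1) 0 (by omega) (by omega) (by rw [hbdef, hf0, h])
        omega
      have hav : a ≠ v := by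
        intro h
        have := finj (k-1) 1 (by omega) (by omega) (by rw [hadef, hf1, h])
        omega
      have hbv : b ≠ v := by
        intro h
        have := finj (k+1) 1 (by omega) (by omega) (by rw [hbdef, hf1, h])
        omega
      by_cases hav2 : a = v + 2
      · have hbv2 : b ≠ v + 2 := by rw [← hav2]; exact fun h => hab h.symm
        exact key _ (nodup_pathEdges hnd) v (v+1) b hv hb_edge hb0 (by omega) hv0
          (by omega) (by omega) hcons hvq_not
      · exact key _ (nodup_pathEdges hnd) v (v+1) a hv ha_edge ha0 (by omega) hv0
          (by omega) (by omega) hcons hvq_not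
  · -- j ≠ 2: use u = v-1
    have hj3 : 3 ≤ j := by omega
    have hjn : j ≤ n := by omega
    have hvp_not : s(v, v-1) ∉ pathEdges l := by
      intro h
      rcases hv_adj _ h with h' | h'
      · omega
      · have := finj j 2 (by omega) (by omega) (by rw [hfj, h'])
        exact hj2 this
    have hcons : ∃ m, s(v, v-1) = s(m, m+1) := by
      refine ⟨v - 1, ?_⟩
      rw [show v - 1 + 1 = v by omega, Sym2.eq_swap]
    obtain ⟨a, hadef⟩ : ∃ a, l.getD (j-1) 0 = a := ⟨_, rfl⟩
    obtain ⟨b, hbdef⟩ : ∃ b, l.getD (j+1) 0 = b := ⟨_, rfl⟩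
    have ha_edge : s(a, v-1) ∈ pathEdges l := by
      have h5 := hedge (j-1) (by omega)
      rw [show j - 1 + 1 = j by omega, hfj, hadef] at h5
      exact h5
    have hb_edge : s(b, v-1) ∈ pathEdges l := by
      have h5 := hedge j (by omega)
      rw [hfj, hbdef] at h5
      rw [Sym2.eq_swap]
      exact h5
    have hab : a ≠ b := by
      intro h
      have := finj (j-1) (j+1) (by omega) (by omega) (by rw [hadef, hbdef, h])
      omega
    have ha0 : a ≠ 0 := by
      intro h
      have := finj (j-1) 0 (by omega) (by omega) (by rw [hadef, hf0, h])
      omega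
    have hb0 : b ≠ 0 := by
      intro h
      have := finj (j+1) 0 (by omega) (by omega) (by rw [hbdef, hf0, h])
      omega
    have hav : a ≠ v := by
      intro h
      have := finj (j-1) 1 (by omega) (by omega) (by rw [hadef, hf1, h])
      omega
    have hbv : b ≠ v := by
      intro h
      have := finj (j+1) 1 (by omega) (by omega) (by rw [hbdef, hf1, h])
      omega
    by_cases hav2 : a = v - 2
    · have hbv2 : b ≠ v - 2 := by rw [← hav2]; exact fun h => hab h.symm
      exact key _ (nodup_pathEdges hnd) v (v-1) b hv hb_edge hb0 (by omega) hv0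
        (by omega) (by omega) hcons hvp_not
    · exact key _ (nodup_pathEdges hnd) v (v-1) a hv ha_edge ha0 (by omega) hv0
        (by omega) (by omega) hcons hvp_not
end

section
/- A single DCJ operation on a signed genome changes the number of cycles of its breakpoint graph by at most one: |c(BG(G')) − c(BG(G))| ≤ 1 whenever G' is obtained from G by one DCJ. -/
open Classical

/-- A signed genome on {0,…,2n+1} is a perfect matching: every vertex lies on
exactly one edge, no loops. -/
def IsMatching {m : ℕ} (G : Multiset (Sym2 (Fin m))) : Prop :=
  (∀ e ∈ G, ¬ e.IsDiag) ∧ ∀ v : Fin m, (G.filter fun e => v ∈ e).card = 1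

/-- DCJ: replace two matching edges {u,v}, {w,x} by {u,w},{v,x} or {u,x},{v,w}. -/
def SDCJ {m : ℕ} (G G' : Multiset (Sym2 (Fin m))) : Prop :=
  ∃ u v w x : Fin m, s(u, v) ∈ G ∧ s(w, x) ∈ G.erase s(u, v) ∧
    (G' = ((G.erase s(u, v)).erase s(w, x)) + {s(u, w), s(v, x)} ∨
     G' = ((G.erase s(u, v)).erase s(w, x)) + {s(u, x), s(v, w)})

/-- Prefix DCJ on a signed genome: one of the two cut edges contains vertex 0. -/
def PrefixSDCJ {n : ℕ} (G G' : Multiset (Sym2 (Fin (2*n+2)))) : Prop :=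
  ∃ v w x : Fin (2*n+2), s((⟨0, by omega⟩ : Fin (2*n+2)), v) ∈ G ∧
    s(w, x) ∈ G.erase s((⟨0, by omega⟩ : Fin (2*n+2)), v) ∧
    (G' = ((G.erase s((⟨0, by omega⟩ : Fin (2*n+2)), v)).erase s(w, x))
            + {s((⟨0, by omega⟩ : Fin (2*n+2)), w), s(v, x)} ∨
     G' = ((G.erase s((⟨0, by omega⟩ : Fin (2*n+2)), v)).erase s(w, x))
            + {s((⟨0, by omega⟩ : Fin (2*n+2)), x), s(v, w)})

/-- The signed identity genome {{2i,2i+1} : 0 ≤ i ≤ n}. -/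
def idMatch (n : ℕ) : Multiset (Sym2 (Fin (2*n+2))) :=
  (Finset.univ : Finset (Fin (n+1))).val.map fun i =>
    s((⟨2*i.val, by have := i.isLt; omega⟩ : Fin (2*n+2)),
      ⟨2*i.val+1, by have := i.isLt; omega⟩)

/-- The breakpoint graph of a signed genome `G`: black edges are the edges of `G`,
grey edges join 2i and 2i+1. Since it is 2-regular, its alternating cycles are
exactly its connected components. -/
def BGraph {n : ℕ} (G : Multiset (Sym2 (Fin (2*n+2)))) : SimpleGraph (Fin (2*n+2)) where
  Adj x y := x ≠ y ∧ (s(x, y) ∈ G ∨ (x : ℕ) / 2 = (y : ℕ) / 2)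
  symm := by
    constructor
    intro x y h
    refine ⟨h.1.symm, ?_⟩
    rcases h.2 with h2 | h2
    · left; rwa [Sym2.eq_swap]
    · right; omega
  loopless := ⟨fun x h => h.1 rfl⟩

/-- Number of (alternating) cycles of the breakpoint graph of `G`
= number of connected components of `BGraph G`. -/
noncomputable def cBG {n : ℕ} (G : Multiset (Sym2 (Fin (2*n+2)))) : ℕ :=
  Nat.card (BGraph G).ConnectedComponent

/-- Number of trivial (length-1) cycles of the breakpoint graph of `G`:
black edges coinciding with a grey edge {2i, 2i+1}. -/
noncomputable def c1BG {n : ℕ} (G : Multiset (Sym2 (Fin (2*n+2)))) : ℕ :=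
  (G.filter fun e => ∃ x y : Fin (2*n+2),
      e = s(x, y) ∧ x ≠ y ∧ (x : ℕ) / 2 = (y : ℕ) / 2).card

/-- `G` is a signed linear genome: the matching of consecutive pairs of the unsigned
translation of some signed permutation (a sequence starting at 0, ending at 2n+1,
whose inner pairs at positions (2i+1, 2i+2) are of the form {2k−1, 2k}). -/
def IsSignedLinear (n : ℕ) (G : Multiset (Sym2 (Fin (2*n+2)))) : Prop :=
  ∃ l : List (Fin (2*n+2)),
    l.Perm (List.finRange (2*n+2)) ∧
    l.head? = some ⟨0, by omega⟩ ∧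
    l.getLast? = some ⟨2*n+1, by omega⟩ ∧
    (∀ (i : ℕ) (h1 : 2*i+1 < l.length) (h2 : 2*i+2 < l.length),
      ((l.get ⟨2*i+1, h1⟩ : ℕ) + 1) / 2 = ((l.get ⟨2*i+2, h2⟩ : ℕ) + 1) / 2) ∧
    G = ↑((List.range (n+1)).map fun i =>
      s(l.getD (2*i) ⟨0, by omega⟩, l.getD (2*i+1) ⟨0, by omega⟩))

/-- The lower-bound quantity n + 1 + c(BG(G)) − 2c₁(BG(G)) − (0 if {0,1} ∈ G else 2). -/
noncomputable def sLB (n : ℕ) (G : Multiset (Sym2 (Fin (2*n+2)))) : ℤ :=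
  (n : ℤ) + 1 + cBG G - 2 * c1BG G -
    (if s((⟨0, by omega⟩ : Fin (2*n+2)), (⟨1, by omega⟩ : Fin (2*n+2))) ∈ G then 0 else 2)

/-!
Let `K` be the breakpoint graph of the black edges the DCJ leaves alone, so that
`BG(G) = K + uv + wx` and `BG(G') = K + uw + vx`. Adding an edge to a graph merges at most two
components, and merges none when its ends are already connected. Starting from `BG(G)`, adding
`uw` loses at most one component, after which `v ~ u ~ w ~ x`, so adding `vx` loses none; the
result contains `BG(G')`, hence has at most as many components. Thus `c(BG(G)) ≤ c(BG(G')) + 1`,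
and symmetrically.
-/

namespace SimpleGraph

variable {V : Type*} {G H : SimpleGraph V}

theorem Reachable.apply_eq_of_forall_adj {β : Type*} {f : V → β}
    (hf : ∀ x y, G.Adj x y → f x = f y) {x y : V} (h : G.Reachable x y) : f x = f y := by
  obtain ⟨p⟩ := h
  induction p with
  | nil => rfl
  | cons hadj _ ih => exact (hf _ _ hadj).trans ih

theorem Reachable.of_forall_adj_reachable (hHG : ∀ x y, H.Adj x y → G.Reachable x y)
    {x y : V} (h : H.Reachable x y) : G.Reachable x y :=
  ConnectedComponent.exact <|
    h.apply_eq_of_forall_adj fun x y hxy => ConnectedComponent.sound (hHG x y hxy)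

theorem reachable_sup_edge (G : SimpleGraph V) (a b : V) : (G ⊔ edge a b).Reachable a b := by
  by_cases hab : a = b
  · exact hab ▸ Reachable.refl a
  · exact Adj.reachable (Or.inr ((edge_adj a b a b).2 ⟨Or.inl ⟨rfl, rfl⟩, hab⟩))

theorem reachable_sup_edge_iff_of_reachable {a b : V} (hab : G.Reachable a b) {x y : V} :
    (G ⊔ edge a b).Reachable x y ↔ G.Reachable x y := by
  refine ⟨Reachable.of_forall_adj_reachable fun x y hxy => ?_, fun h => h.mono le_sup_left⟩
  rcases hxy with hG | hedge
  · exact hG.reachable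
  · rcases ((edge_adj a b x y).1 hedge).1 with ⟨rfl, rfl⟩ | ⟨rfl, rfl⟩
    exacts [hab, hab.symm]

namespace ConnectedComponent

theorem card_sup_edge_of_reachable {a b : V} (hab : G.Reachable a b) :
    Nat.card (G ⊔ edge a b).ConnectedComponent = Nat.card G.ConnectedComponent :=
  Nat.card_congr (Quot.congrRight fun _ _ => reachable_sup_edge_iff_of_reachable hab)

theorem card_le_card_sup_edge_add_one [Finite V] (G : SimpleGraph V) (a b : V) :
    Nat.card G.ConnectedComponent ≤ Nat.card (G ⊔ edge a b).ConnectedComponent + 1 := by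
  -- `φ` collapses the component of `b` onto that of `a`, so it is constant along the new edge.
  let φ : V → G.ConnectedComponent := fun x =>
    if G.Reachable b x then G.connectedComponentMk a else G.connectedComponentMk x
  have hφ : ∀ x y, (G ⊔ edge a b).Adj x y → φ x = φ y := by
    rintro x y (hxy | hedge)
    · have hbxy : G.Reachable b x ↔ G.Reachable b y :=
        ⟨fun h => h.trans hxy.reachable, fun h => h.trans hxy.reachable.symm⟩
      simp only [φ, hbxy, connectedComponentMk_eq_of_adj hxy]
    · rcases ((edge_adj a b x y).1 hedge).1 with ⟨rfl, rfl⟩ | ⟨rfl, rfl⟩ <;>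
        by_cases G.Reachable y x <;> simp [φ]
  let ψ : (G ⊔ edge a b).ConnectedComponent → G.ConnectedComponent :=
    Quot.lift φ fun _ _ => Reachable.apply_eq_of_forall_adj hφ
  have hsurj : Function.Surjective fun o : Option _ => o.elim (G.connectedComponentMk b) ψ := by
    refine ConnectedComponent.ind fun x => ?_
    by_cases hbx : G.Reachable b x
    · exact ⟨none, ConnectedComponent.sound hbx⟩
    · exact ⟨some ((G ⊔ edge a b).connectedComponentMk x), if_neg hbx⟩
  exact (Nat.card_le_card_of_surjective _ hsurj).trans_eq Finite.card_option

theorem card_sup_edge_sup_edge_le_add_one [Finite V] (K : SimpleGraph V) (u v w x : V) :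
    Nat.card (K ⊔ edge u v ⊔ edge w x).ConnectedComponent ≤
      Nat.card (K ⊔ edge u w ⊔ edge v x).ConnectedComponent + 1 := by
  set H := K ⊔ edge u v ⊔ edge w x
  have hvx : (H ⊔ edge u w).Reachable v x :=
    (((reachable_sup_edge K u v).mono (le_sup_left.trans le_sup_left)).symm.trans
      (reachable_sup_edge H u w)).trans ((reachable_sup_edge _ w x).mono le_sup_left)
  have hle : K ⊔ edge u w ⊔ edge v x ≤ H ⊔ edge u w ⊔ edge v x :=
    sup_le_sup_right (sup_le_sup_right (le_sup_left.trans le_sup_left) _) _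
  calc Nat.card H.ConnectedComponent
      ≤ Nat.card (H ⊔ edge u w).ConnectedComponent + 1 := card_le_card_sup_edge_add_one H u w
    _ = Nat.card (H ⊔ edge u w ⊔ edge v x).ConnectedComponent + 1 := by
        rw [card_sup_edge_of_reachable hvx]
    _ ≤ Nat.card (K ⊔ edge u w ⊔ edge v x).ConnectedComponent + 1 := by
        gcongr; exact card_le_card_of_le hle

theorem abs_card_sup_edge_sup_edge_sub_le_one [Finite V] (K : SimpleGraph V) (u v w x : V) :
    |(Nat.card (K ⊔ edge u w ⊔ edge v x).ConnectedComponent : ℤ) -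
      Nat.card (K ⊔ edge u v ⊔ edge w x).ConnectedComponent| ≤ 1 := by
  have h₁ := card_sup_edge_sup_edge_le_add_one K u v w x
  have h₂ := card_sup_edge_sup_edge_le_add_one K u w v x
  rw [abs_le]
  constructor <;> omega

end ConnectedComponent

end SimpleGraph

open SimpleGraph

theorem bGraph_cons_cons {n : ℕ} (a b c d : Fin (2*n+2)) (E : Multiset (Sym2 (Fin (2*n+2)))) :
    BGraph (s(a, b) ::ₘ s(c, d) ::ₘ E) = BGraph E ⊔ edge a b ⊔ edge c d := by
  ext x y
  simp only [BGraph, Multiset.mem_cons, sup_adj, edge_adj, Sym2.eq_iff]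
  tauto

theorem dcj_changes_cycles_by_at_most_one_general (n : ℕ)
    (G G' : Multiset (Sym2 (Fin (2*n+2)))) (h : SDCJ G G') :
    |(cBG G' : ℤ) - cBG G| ≤ 1 := by
  obtain ⟨u, v, w, x, huv, hwx, hG' | hG'⟩ := h
  all_goals
    set E := (G.erase s(u, v)).erase s(w, x)
    have hG : G = s(u, v) ::ₘ s(w, x) ::ₘ E := by
      rw [Multiset.cons_erase hwx, Multiset.cons_erase huv]
    rw [cBG, cBG, hG', add_comm E, Multiset.insert_eq_cons, Multiset.cons_add,
      Multiset.singleton_add, hG, bGraph_cons_cons, bGraph_cons_cons]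
  · exact ConnectedComponent.abs_card_sup_edge_sup_edge_sub_le_one (BGraph E) u v w x
  · rw [edge_comm w x]
    exact ConnectedComponent.abs_card_sup_edge_sup_edge_sub_le_one (BGraph E) u v x w

/-- A single DCJ changes the number of cycles of the breakpoint graph by at most one. -/
theorem dcj_changes_cycles_by_at_most_one (n : ℕ)
    (G G' : Multiset (Sym2 (Fin (2*n+2)))) (hG : IsMatching G) (h : SDCJ G G') :
    |(cBG G' : ℤ) - cBG G| ≤ 1 :=
  dcj_changes_cycles_by_at_most_one_general n G G' h
end

section
/- Let G be a signed linear genome with {0,1} ∉ G, say {0,v} ∈ G with v ≠ 1. Then there exists a prefix DCJ producing a genome G' with (c(BG(G')) , c₁(BG(G'))) equal to (c+1, c₁+1) or (c+1, c₁+2), where c,c₁ are the cycle counts of BG(G); in both cases the quantity n + 1 + c(BG(·)) − 2c₁(BG(·)) − [0 if {0,1} present else 2] decreases by exactly 1. -/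
open Classical

lemma isMatching_of_isSignedLinear {n : ℕ} {G : Multiset (Sym2 (Fin (2*n+2)))}
    (hG : IsSignedLinear n G) : IsMatching G := by
  classical
  obtain ⟨l, hperm, -, -, -, hGeq⟩ := hG
  have hlen : l.length = 2*n+2 := by simpa using hperm.length_eq
  have hnodup : l.Nodup := hperm.nodup_iff.mpr (List.nodup_finRange _)
  have hmem : ∀ a : Fin (2*n+2), a ∈ l := fun a => hperm.mem_iff.mpr (by simp)
  set d : Fin (2*n+2) := ⟨0, by omega⟩ with hd
  set f : ℕ → Sym2 (Fin (2*n+2)) := fun i => s(l.getD (2*i) d, l.getD (2*i+1) d) with hf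
  have hmemG : ∀ e, e ∈ G ↔ ∃ i, i < n+1 ∧ e = f i := by
    intro e
    rw [hGeq]
    simp only [Multiset.mem_coe, List.mem_map, List.mem_range]
    constructor
    · rintro ⟨i, hi, rfl⟩; exact ⟨i, hi, rfl⟩
    · rintro ⟨i, hi, rfl⟩; exact ⟨i, hi, rfl⟩
  have hgd : ∀ (i : ℕ) (hi : i < l.length), l.getD i d = l[i] :=
    fun i hi => List.getD_eq_getElem l d hi
  constructor
  · intro e he
    obtain ⟨i, hi, rfl⟩ := (hmemG e).mp he
    rw [hf]
    simp only [Sym2.mk_isDiag_iff]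
    rw [hgd (2*i) (by omega), hgd (2*i+1) (by omega), hnodup.getElem_inj_iff]
    omega
  · intro u
    obtain ⟨j, hj, hju⟩ := List.mem_iff_getElem.mp (hmem u)
    rw [hlen] at hj
    have huniq : ∀ k (hk : k < l.length), l[k] = u → k = j := by
      intro k hk hku
      have : l[k]'hk = l[j]'(by omega) := by rw [hku, hju]
      exact hnodup.getElem_inj_iff.mp this
    have hGm : G = Multiset.map f (Multiset.range (n+1)) := by
      rw [hGeq]; rfl
    rw [hGm]
    have hi0 : j/2 ∈ Multiset.range (n+1) := by rw [Multiset.mem_range]; omega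
    rw [← Multiset.cons_erase hi0, Multiset.map_cons,
      Multiset.filter_cons_of_pos, Multiset.card_cons]
    · have : Multiset.filter (fun e => u ∈ e) (Multiset.map f ((Multiset.range (n+1)).erase (j/2))) = 0 := by
        rw [Multiset.filter_eq_nil]
        intro a ha hua
        obtain ⟨i, hi, rfl⟩ := Multiset.mem_map.mp ha
        have hine : i ≠ j/2 ∧ i ∈ Multiset.range (n+1) :=
          ((Multiset.nodup_range (n+1)).mem_erase_iff).mp hi
        have hilt : i < n+1 := Multiset.mem_range.mp hine.2
        rw [hf] at hua
        simp only [Sym2.mem_iff] at hua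
        rcases hua with h | h
        · rw [hgd (2*i) (by omega)] at h
          have := huniq (2*i) (by omega) h.symm
          omega
        · rw [hgd (2*i+1) (by omega)] at h
          have := huniq (2*i+1) (by omega) h.symm
          omega
      rw [this]; rfl
    · rw [hf]
      simp only [Sym2.mem_iff]
      by_cases hj2 : j % 2 = 0
      · left
        rw [show 2*(j/2) = j from by omega, hgd j (by omega)]
        exact hju.symm
      · right
        rw [show 2*(j/2)+1 = j from by omega, hgd j (by omega)]
        exact hju.symm

lemma matching_erase {m : ℕ} {G : Multiset (Sym2 (Fin m))} (hM : IsMatching G)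
    {u : Fin m} {e : Sym2 (Fin m)} (he : e ∈ G) (hu : u ∈ e) :
    ∀ f ∈ G.erase e, u ∉ f := by
  classical
  intro f hf huf
  have h2 := hM.2 u
  rw [← Multiset.cons_erase he, Multiset.filter_cons_of_pos (p := fun e => u ∈ e) _ hu, Multiset.card_cons] at h2
  have h3 : Multiset.filter (fun e => u ∈ e) (G.erase e) = 0 :=
    Multiset.card_eq_zero.mp (by omega)
  exact (Multiset.filter_eq_nil.mp h3) f hf huf

lemma matching_eq {m : ℕ} {G : Multiset (Sym2 (Fin m))} (hM : IsMatching G)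
    {u : Fin m} {e f : Sym2 (Fin m)} (he : e ∈ G) (hf : f ∈ G) (hu : u ∈ e)
    (hu' : u ∈ f) : e = f := by
  by_contra hne
  exact matching_erase hM he hu f
    ((Multiset.mem_erase_of_ne (fun h => hne h.symm)).mpr hf) hu'

lemma c1BG_add {n : ℕ} (s t : Multiset (Sym2 (Fin (2*n+2)))) :
    c1BG (s + t) = c1BG s + c1BG t := by
  unfold c1BG; rw [Multiset.filter_add, Multiset.card_add]

lemma c1BG_cons {n : ℕ} (e : Sym2 (Fin (2*n+2))) (s : Multiset (Sym2 (Fin (2*n+2)))) :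
    c1BG (e ::ₘ s) = c1BG s +
      (if ∃ x y : Fin (2*n+2), e = s(x, y) ∧ x ≠ y ∧ (x : ℕ) / 2 = (y : ℕ) / 2
       then 1 else 0) := by
  classical
  unfold c1BG
  split_ifs with h
  · rw [Multiset.filter_cons_of_pos (p := fun e => ∃ x y : Fin (2*n+2), e = s(x, y) ∧ x ≠ y ∧ (x : ℕ) / 2 = (y : ℕ) / 2) _ h, Multiset.card_cons]
  · rw [Multiset.filter_cons_of_neg (p := fun e => ∃ x y : Fin (2*n+2), e = s(x, y) ∧ x ≠ y ∧ (x : ℕ) / 2 = (y : ℕ) / 2) _ h]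
    simp

lemma c1BG_zero {n : ℕ} : c1BG (0 : Multiset (Sym2 (Fin (2*n+2)))) = 0 := by
  unfold c1BG; simp

lemma trivIff {n : ℕ} (a b : Fin (2*n+2)) :
    (∃ x y : Fin (2*n+2), s(a, b) = s(x, y) ∧ x ≠ y ∧ (x : ℕ) / 2 = (y : ℕ) / 2)
      ↔ a ≠ b ∧ (a : ℕ) / 2 = (b : ℕ) / 2 := by
  constructor
  · rintro ⟨c, d, he, hne, hdd⟩
    rcases Sym2.eq_iff.mp he with ⟨rfl, rfl⟩ | ⟨rfl, rfl⟩
    · exact ⟨hne, hdd⟩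
    · exact ⟨fun h => hne h.symm, hdd.symm⟩
  · rintro ⟨h1, h2⟩; exact ⟨a, b, rfl, h1, h2⟩

/-- If {0,1} ∉ G and {0,v} ∈ G (v ≠ 1), some prefix DCJ produces G' with
(c, c₁) becoming (c+1, c₁+1) or (c+1, c₁+2); in both cases the lower-bound
quantity sLB decreases by exactly one. -/
theorem prefix_sdcj_decreases_lb (n : ℕ) (G : Multiset (Sym2 (Fin (2*n+2))))
    (hG : IsSignedLinear n G) (v : Fin (2*n+2))
    (h01 : s((⟨0, by omega⟩ : Fin (2*n+2)), (⟨1, by omega⟩ : Fin (2*n+2))) ∉ G)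
    (hv : s((⟨0, by omega⟩ : Fin (2*n+2)), v) ∈ G)
    (hv1 : v ≠ ⟨1, by omega⟩) :
    ∃ G', PrefixSDCJ G G' ∧
      (cBG G' = cBG G + 1 ∧ (c1BG G' = c1BG G + 1 ∨ c1BG G' = c1BG G + 2)) ∧
      sLB n G' = sLB n G - 1 := by
  classical
  have hM := isMatching_of_isSignedLinear hG
  set z0 : Fin (2*n+2) := ⟨0, by omega⟩ with hz0def
  set z1 : Fin (2*n+2) := ⟨1, by omega⟩ with hz1def
  have hz0v : (z0 : ℕ) = 0 := rfl
  have hz1v : (z1 : ℕ) = 1 := rfl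
  have hv0 : v ≠ z0 := fun h => (hM.1 _ hv) (Sym2.mk_isDiag_iff.mpr h.symm)
  have hv0' : (v : ℕ) ≠ 0 := fun h => hv0 (Fin.ext h)
  have hv1' : (v : ℕ) ≠ 1 := fun h => hv1 (Fin.ext h)
  have hvlt : (v : ℕ) < 2*n+2 := v.isLt
  -- the grey partner w of v
  have hwlt : 2*((v:ℕ)/2) + (1 - (v:ℕ)%2) < 2*n+2 := by omega
  set w : Fin (2*n+2) := ⟨2*((v:ℕ)/2) + (1 - (v:ℕ)%2), hwlt⟩ with hwdef
  have hwval : (w : ℕ) = 2*((v:ℕ)/2) + (1 - (v:ℕ)%2) := rfl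
  have hw2 : (w : ℕ)/2 = (v : ℕ)/2 := by omega
  have hwv : w ≠ v := by
    intro h
    have : (w : ℕ) = (v : ℕ) := congrArg Fin.val h
    omega
  have hw0 : (w : ℕ) ≠ 0 := by omega
  have hw1 : (w : ℕ) ≠ 1 := by omega
  have hw0' : w ≠ z0 := fun h => hw0 (congrArg Fin.val h)
  have hw1' : w ≠ z1 := fun h => hw1 (congrArg Fin.val h)
  have hgrey_uniq : ∀ z : Fin (2*n+2), (z : ℕ)/2 = (v : ℕ)/2 → z ≠ v → z = w := by
    intro z h hz
    have hzlt := z.isLt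
    have hz' : (z : ℕ) ≠ (v : ℕ) := fun h2 => hz (Fin.ext h2)
    apply Fin.ext
    omega
  -- the black edge at w
  obtain ⟨ew, hew⟩ : ∃ e, e ∈ Multiset.filter (fun e => w ∈ e) G := by
    apply Multiset.exists_mem_of_ne_zero
    intro h0
    have := hM.2 w
    rw [h0] at this
    simp at this
  have hewG : ew ∈ G := (Multiset.mem_filter.mp hew).1
  have hwew : w ∈ ew := (Multiset.mem_filter.mp hew).2
  obtain ⟨x, rfl⟩ : ∃ x, ew = s(w, x) := Sym2.mem_iff_exists.mp hwew
  have hwx : s(w, x) ∈ G := hewG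
  have hwx_ne : x ≠ w := fun h => (hM.1 _ hwx) (Sym2.mk_isDiag_iff.mpr h.symm)
  have he12 : s(w, x) ≠ s(z0, v) := by
    intro h
    rcases Sym2.eq_iff.mp h with ⟨h1, h2⟩ | ⟨h1, h2⟩
    · exact hw0' h1
    · exact hwv h1
  have hx0 : x ≠ z0 := by
    intro h
    apply he12
    apply matching_eq hM hwx hv
    · rw [h]; exact Sym2.mem_iff.mpr (Or.inr rfl)
    · exact Sym2.mem_iff.mpr (Or.inl rfl)
  have hx0' : (x : ℕ) ≠ 0 := fun h => hx0 (Fin.ext h)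
  have hx_v : x ≠ v := by
    intro h
    have := matching_eq hM hwx hv (by rw [h]; exact Sym2.mem_iff.mpr (Or.inr rfl))
      (Sym2.mem_iff.mpr (Or.inr rfl))
    exact he12 this
  have he2 : s(w, x) ∈ G.erase s(z0, v) := (Multiset.mem_erase_of_ne he12).mpr hwx
  set base := (G.erase s(z0, v)).erase s(w, x) with hbase
  set Gn := base + {s(z0, x), s(v, w)} with hGn
  have hGdec : G = s(z0, v) ::ₘ s(w, x) ::ₘ base := by
    rw [hbase, Multiset.cons_erase he2, Multiset.cons_erase hv]
  -- base edge facts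
  have hbase_sub : ∀ f ∈ base, f ∈ G :=
    fun f hf => Multiset.mem_of_mem_erase (Multiset.mem_of_mem_erase hf)
  have hbase_nv : ∀ f ∈ base, v ∉ f := fun f hf =>
    matching_erase hM hv (Sym2.mem_iff.mpr (Or.inr rfl)) f (Multiset.mem_of_mem_erase hf)
  have hbase_n0 : ∀ f ∈ base, z0 ∉ f := fun f hf =>
    matching_erase hM hv (Sym2.mem_iff.mpr (Or.inl rfl)) f (Multiset.mem_of_mem_erase hf)
  have hbase_nw : ∀ f ∈ base, w ∉ f := by
    intro f hf
    rw [hbase, Multiset.erase_comm] at hf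
    exact matching_erase hM hwx (Sym2.mem_iff.mpr (Or.inl rfl)) f
      (Multiset.mem_of_mem_erase hf)
  have hGn_mem : ∀ e, e ∈ Gn ↔ e ∈ base ∨ e = s(z0, x) ∨ e = s(v, w) := by
    intro e
    rw [hGn, Multiset.mem_add]
    constructor
    · rintro (h | h)
      · exact Or.inl h
      · rcases Multiset.mem_cons.mp h with h | h
        · exact Or.inr (Or.inl h)
        · exact Or.inr (Or.inr (Multiset.mem_singleton.mp h))
    · rintro (h | h | h)
      · exact Or.inl h
      · exact Or.inr (Multiset.mem_cons.mpr (Or.inl h))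
      · exact Or.inr (Multiset.mem_cons.mpr (Or.inr (Multiset.mem_singleton.mpr h)))
  -- neighbors of v and w in BGraph Gn
  have hNv : ∀ z, (BGraph Gn).Adj v z → z = w := by
    rintro z ⟨hne, hb | hg⟩
    · rcases (hGn_mem _).mp hb with hb | hb | hb
      · exact absurd (Sym2.mem_iff.mpr (Or.inl rfl)) (hbase_nv _ hb)
      · rcases Sym2.eq_iff.mp hb with ⟨h1, h2⟩ | ⟨h1, h2⟩
        · exact absurd h1 hv0
        · exact absurd h1.symm hx_v
      · rcases Sym2.eq_iff.mp hb with ⟨h1, h2⟩ | ⟨h1, h2⟩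
        · exact h2
        · exact absurd h1.symm hwv
    · exact hgrey_uniq z hg.symm (Ne.symm hne)
  have hNw : ∀ z, (BGraph Gn).Adj w z → z = v := by
    rintro z ⟨hne, hb | hg⟩
    · rcases (hGn_mem _).mp hb with hb | hb | hb
      · exact absurd (Sym2.mem_iff.mpr (Or.inl rfl)) (hbase_nw _ hb)
      · rcases Sym2.eq_iff.mp hb with ⟨h1, h2⟩ | ⟨h1, h2⟩
        · exact absurd h1 hw0'
        · exact absurd h1.symm hwx_ne
      · rcases Sym2.eq_iff.mp hb with ⟨h1, h2⟩ | ⟨h1, h2⟩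
        · exact absurd h1 (fun h => hwv h)
        · exact h2
    · by_cases hzv : z = v
      · exact hzv
      · exact absurd (hgrey_uniq z (hg.symm.trans hw2) hzv) (Ne.symm hne)
  have hclos : ∀ z, Relation.ReflTransGen (BGraph Gn).Adj v z → z = v ∨ z = w := by
    intro z h
    induction h with
    | refl => exact Or.inl rfl
    | tail _ hadj ih =>
      rcases ih with rfl | rfl
      · exact Or.inr (hNv _ hadj)
      · exact Or.inl (hNw _ hadj)
  -- basic adjacencies
  have hA0v : (BGraph G).Adj z0 v := ⟨Ne.symm hv0, Or.inl hv⟩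
  have hAvw : (BGraph G).Adj v w := ⟨Ne.symm hwv, Or.inr hw2.symm⟩
  have hAwx : (BGraph G).Adj w x := ⟨Ne.symm hwx_ne, Or.inl hwx⟩
  have hA0x' : (BGraph Gn).Adj z0 x :=
    ⟨Ne.symm hx0, Or.inl ((hGn_mem _).mpr (Or.inr (Or.inl rfl)))⟩
  have hAvw' : (BGraph Gn).Adj v w := ⟨Ne.symm hwv, Or.inr hw2.symm⟩
  set cm : Fin (2*n+2) → (BGraph Gn).ConnectedComponent :=
    (BGraph Gn).connectedComponentMk with hcm
  have hc0v : cm z0 ≠ cm v := by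
    intro h
    have hr : (BGraph Gn).Reachable v z0 :=
      (SimpleGraph.ConnectedComponent.eq.mp h).symm
    rcases hclos z0 ((SimpleGraph.reachable_iff_reflTransGen _ _).mp hr) with h2 | h2
    · exact hv0 h2.symm
    · exact hw0' h2.symm
  have hcvw : cm v = cm w := SimpleGraph.ConnectedComponent.sound hAvw'.reachable
  have hc0x : cm z0 = cm x := SimpleGraph.ConnectedComponent.sound hA0x'.reachable
  set ψ : Fin (2*n+2) → (BGraph Gn).ConnectedComponent :=
    fun a => if cm a = cm v then cm z0 else cm a with hψ
  have hψ_adj' : ∀ a b, (BGraph Gn).Adj a b → ψ a = ψ b := by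
    intro a b h
    have hcab : cm a = cm b := SimpleGraph.ConnectedComponent.sound h.reachable
    simp only [hψ, hcab]
  have hψ0v : ψ z0 = ψ v := by
    simp only [hψ]
    rw [if_neg hc0v]
    simp
  have hψwx : ψ w = ψ x := by
    simp only [hψ]
    rw [if_pos hcvw.symm, if_neg (fun h => hc0v (hc0x.trans h)), hc0x]
  have hψadj : ∀ a b, (BGraph G).Adj a b → ψ a = ψ b := by
    rintro a b ⟨hne, hb | hg⟩
    · rw [hGdec] at hb
      rcases Multiset.mem_cons.mp hb with hb | hb
      · rcases Sym2.eq_iff.mp hb with ⟨h1, h2⟩ | ⟨h1, h2⟩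
        · rw [h1, h2]; exact hψ0v
        · rw [h1, h2]; exact hψ0v.symm
      rcases Multiset.mem_cons.mp hb with hb | hb
      · rcases Sym2.eq_iff.mp hb with ⟨h1, h2⟩ | ⟨h1, h2⟩
        · rw [h1, h2]; exact hψwx
        · rw [h1, h2]; exact hψwx.symm
      · exact hψ_adj' _ _ ⟨hne, Or.inl ((hGn_mem _).mpr (Or.inl hb))⟩
    · exact hψ_adj' _ _ ⟨hne, Or.inr hg⟩
  have hwalk : ∀ {a b : Fin (2*n+2)} (p : (BGraph G).Walk a b), ψ a = ψ b := by
    intro a b p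
    induction p with
    | nil => rfl
    | cons h _ ih => exact (hψadj _ _ h).trans ih
  have hH'H : ∀ a b, (BGraph Gn).Adj a b → (BGraph G).Reachable a b := by
    rintro a b ⟨hne, hb | hg⟩
    · rcases (hGn_mem _).mp hb with hb | hb | hb
      · exact SimpleGraph.Adj.reachable ⟨hne, Or.inl (hbase_sub _ hb)⟩
      · have h0x : (BGraph G).Reachable z0 x :=
          hA0v.reachable.trans (hAvw.reachable.trans hAwx.reachable)
        rcases Sym2.eq_iff.mp hb with ⟨h1, h2⟩ | ⟨h1, h2⟩
        · rw [h1, h2]; exact h0x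
        · rw [h1, h2]; exact h0x.symm
      · rcases Sym2.eq_iff.mp hb with ⟨h1, h2⟩ | ⟨h1, h2⟩
        · rw [h1, h2]; exact hAvw.reachable
        · rw [h1, h2]; exact hAvw.reachable.symm
    · exact SimpleGraph.Adj.reachable ⟨hne, Or.inr hg⟩
  have hH'Hr : ∀ a b, (BGraph Gn).Reachable a b → (BGraph G).Reachable a b := by
    intro a b h
    rw [SimpleGraph.reachable_iff_reflTransGen] at h
    induction h with
    | refl => exact SimpleGraph.Reachable.refl _
    | tail _ hadj ih => exact ih.trans (hH'H _ _ hadj)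
  have hkey : ∀ c, cm c = cm v → (BGraph G).Reachable c z0 := by
    intro c hc
    have h1 : (BGraph Gn).Reachable c v := SimpleGraph.ConnectedComponent.eq.mp hc
    exact (hH'Hr _ _ h1).trans hA0v.reachable.symm
  have hψrev : ∀ a b, ψ a = ψ b → (BGraph G).Reachable a b := by
    intro a b h
    simp only [hψ] at h
    by_cases ha : cm a = cm v
    · by_cases hb2 : cm b = cm v
      · exact (hkey a ha).trans (hkey b hb2).symm
      · rw [if_pos ha, if_neg hb2] at h
        exact (hkey a ha).trans (hH'Hr _ _ (SimpleGraph.ConnectedComponent.eq.mp h))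
    · by_cases hb2 : cm b = cm v
      · rw [if_neg ha, if_pos hb2] at h
        exact (hH'Hr _ _ (SimpleGraph.ConnectedComponent.eq.mp h)).trans (hkey b hb2).symm
      · rw [if_neg ha, if_neg hb2] at h
        exact hH'Hr _ _ (SimpleGraph.ConnectedComponent.eq.mp h)
  -- the bijection
  set Φ : (BGraph G).ConnectedComponent → (BGraph Gn).ConnectedComponent :=
    SimpleGraph.ConnectedComponent.lift ψ (fun a b p _ => hwalk p) with hΦ
  have hΦmk : ∀ a, Φ ((BGraph G).connectedComponentMk a) = ψ a := fun a => rfl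
  have hΦne : ∀ C, Φ C ≠ cm v := by
    intro C
    induction C using SimpleGraph.ConnectedComponent.ind with
    | _ a =>
      rw [hΦmk]
      simp only [hψ]
      by_cases ha : cm a = cm v
      · rw [if_pos ha]; exact hc0v
      · rw [if_neg ha]; exact ha
  set Ψ : (BGraph G).ConnectedComponent →
      {C : (BGraph Gn).ConnectedComponent // C ≠ cm v} :=
    fun C => ⟨Φ C, hΦne C⟩ with hΨ
  have hinj : Function.Injective Ψ := by
    intro C D h
    have h' : Φ C = Φ D := congrArg Subtype.val h
    clear h
    induction C using SimpleGraph.ConnectedComponent.ind with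
    | _ a =>
    induction D using SimpleGraph.ConnectedComponent.ind with
    | _ b =>
    rw [hΦmk, hΦmk] at h'
    exact SimpleGraph.ConnectedComponent.sound (hψrev a b h')
  have hsurj : Function.Surjective Ψ := by
    rintro ⟨C, hC⟩
    induction C using SimpleGraph.ConnectedComponent.ind with
    | _ a =>
      refine ⟨(BGraph G).connectedComponentMk a, Subtype.ext ?_⟩
      show Φ ((BGraph G).connectedComponentMk a) = (BGraph Gn).connectedComponentMk a
      rw [hΦmk]
      simp only [hψ]
      rw [if_neg hC]
  -- cardinality
  haveI : Finite ((BGraph Gn).ConnectedComponent) := Quot.finite _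
  haveI : Finite ((BGraph G).ConnectedComponent) := Quot.finite _
  haveI : Fintype ((BGraph Gn).ConnectedComponent) := Fintype.ofFinite _
  haveI : Fintype ((BGraph G).ConnectedComponent) := Fintype.ofFinite _
  haveI : Fintype {C : (BGraph Gn).ConnectedComponent // C ≠ cm v} := Fintype.ofFinite _
  have hcard : cBG Gn = cBG G + 1 := by
    unfold cBG
    have e1 : (BGraph Gn).ConnectedComponent ≃
        Option {C : (BGraph Gn).ConnectedComponent // C ≠ cm v} :=
      (Equiv.optionSubtypeNe (cm v)).symm
    have e2 : {C : (BGraph Gn).ConnectedComponent // C ≠ cm v} ≃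
        (BGraph G).ConnectedComponent :=
      (Equiv.ofBijective Ψ ⟨hinj, hsurj⟩).symm
    rw [Nat.card_congr e1, Nat.card_eq_fintype_card, Nat.card_eq_fintype_card,
      Fintype.card_option]
    congr 1
    rw [← Nat.card_eq_fintype_card, ← Nat.card_eq_fintype_card]
    exact Nat.card_congr e2
  -- c1 counting
  have hnP1 : ¬ (∃ a b : Fin (2*n+2), s(z0, v) = s(a, b) ∧ a ≠ b ∧
      (a : ℕ)/2 = (b : ℕ)/2) := by
    rw [trivIff]
    rintro ⟨h1, h2⟩
    rw [hz0v] at h2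
    omega
  have hnP2 : ¬ (∃ a b : Fin (2*n+2), s(w, x) = s(a, b) ∧ a ≠ b ∧
      (a : ℕ)/2 = (b : ℕ)/2) := by
    rw [trivIff]
    rintro ⟨h1, h2⟩
    exact hwx_ne (hgrey_uniq x (h2.symm.trans hw2) hx_v)
  have hP4 : (∃ a b : Fin (2*n+2), s(v, w) = s(a, b) ∧ a ≠ b ∧
      (a : ℕ)/2 = (b : ℕ)/2) := by
    rw [trivIff]
    exact ⟨Ne.symm hwv, hw2.symm⟩
  have hPx : (∃ a b : Fin (2*n+2), s(z0, x) = s(a, b) ∧ a ≠ b ∧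
      (a : ℕ)/2 = (b : ℕ)/2) ↔ x = z1 := by
    rw [trivIff]
    constructor
    · rintro ⟨h1, h2⟩
      rw [hz0v] at h2
      have := x.isLt
      apply Fin.ext
      rw [hz1v]
      omega
    · rintro rfl
      refine ⟨fun h => ?_, by rw [hz0v, hz1v]⟩
      · have : (z0 : ℕ) = (z1 : ℕ) := congrArg Fin.val h
        rw [hz0v, hz1v] at this
        omega
  have hc1G : c1BG G = c1BG base := by
    rw [hGdec, c1BG_cons, c1BG_cons, if_neg hnP1, if_neg hnP2]
    omega
  have hpair : ({s(z0, x), s(v, w)} : Multiset (Sym2 (Fin (2*n+2)))) =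
      s(z0, x) ::ₘ s(v, w) ::ₘ 0 := rfl
  have hc1Gn : c1BG Gn = c1BG base + (if x = z1 then 2 else 1) := by
    rw [hGn, c1BG_add, hpair, c1BG_cons, c1BG_cons, c1BG_zero, if_pos hP4]
    by_cases hx1 : x = z1
    · rw [if_pos ((hPx).mpr hx1), if_pos hx1]
    · rw [if_neg (fun h => hx1 ((hPx).mp h)), if_neg hx1]
  -- membership of {0,1} in Gn
  have h01Gn : s(z0, z1) ∈ Gn ↔ x = z1 := by
    rw [hGn_mem]
    constructor
    · rintro (h | h | h)
      · exact absurd h (by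
          intro hmem
          exact h01 (hbase_sub _ hmem))
      · rcases Sym2.eq_iff.mp h.symm with ⟨h1, h2⟩ | ⟨h1, h2⟩
        · exact h2
        · exact absurd h2 hx0
      · rcases Sym2.eq_iff.mp h.symm with ⟨h1, h2⟩ | ⟨h1, h2⟩
        · exact absurd h1 hv0
        · exact absurd h1 hv1
    · rintro rfl
      exact Or.inr (Or.inl rfl)
  -- assemble
  refine ⟨Gn, ⟨v, w, x, hv, he2, Or.inr hGn⟩, ⟨hcard, ?_⟩, ?_⟩
  · by_cases hx1 : x = z1
    · right; rw [hc1Gn, if_pos hx1, hc1G]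
    · left; rw [hc1Gn, if_neg hx1, hc1G]
  · unfold sLB
    rw [if_neg h01, hcard, hc1Gn, hc1G]
    by_cases hx1 : x = z1
    · rw [if_pos (h01Gn.mpr hx1), if_pos hx1]
      push_cast
      ring
    · rw [if_neg (fun h => hx1 (h01Gn.mp h)), if_neg hx1]
      push_cast
      ring
end
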